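/- arXiv:1002.4676 — 4 statements merged into one kernel-verified Lean document; each statement's English description precedes it below -/
import Mathlib

section
/- For all d ≥ 2, h ≥ 1, c ≥ 1 and every level l with 1 ≤ l ≤ h, and every node u of G'_{d,h} of height l, the black pebbling cost of placing a pebble on u (starting from the empty configuration) is exactly c(d−1)(l−1) + 1. In particular, any two nodes of G'_{d,h} that are children of a common node have equal black pebbling cost. -/
/-! The balanced `d`-ary tree `T_d^h` with `h` levels: a node at depth `l` (the root having
depth `0`, the leaves depth `h-1`; a node at depth `l` has level `h - l`, so leaves have
level 1 and the tree root level `h`) is indexed by an element of `Fin (d^l)`; the children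
of node `(l, j)` are the nodes `(l+1, d*j + r)` for `r < d` (child number `r` among its
siblings, in left-to-right order). -/

/-- The nodes of the balanced `d`-ary tree with `h` levels. -/
abbrev TreeNode (d h : ℕ) := Σ l : Fin h, Fin (d ^ (l : ℕ))

/-- The inorder-traversal strict order on `T_d^h` (first the leftmost subtree, then the
node, then the remaining subtrees in order): node `(l, j)` gets the key
`(j*d + 1)/d^(l+1)`, and `u < v` iff `key u < key v` (stated here with the denominators
cleared). -/
def inorderLt (d h : ℕ) (u v : TreeNode d h) : Prop :=
  ((u.2 : ℕ) * d + 1) * d ^ (v.1 : ℕ) < ((v.2 : ℕ) * d + 1) * d ^ (u.1 : ℕ)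

/-- The copy nodes of `G_{d,h}`: `c` copies of each node of `T_d^h` (with the copy index
in `Fin c`, `0`-based). -/
abbrev CopyNode (d h c : ℕ) := TreeNode d h × Fin c

/-- The order `<` on copy nodes: `u < u'` iff the underlying tree nodes satisfy
`T(u) < T(u')` in inorder, or they are copies of the same tree node and the copy index of
`u` is smaller. -/
def copyLt (d h c : ℕ) (u v : CopyNode d h c) : Prop :=
  inorderLt d h u.1 v.1 ∨ (u.1 = v.1 ∧ (u.2 : ℕ) < (v.2 : ℕ))

/-- The nodes of `G_{d,h}` (and of `G'_{d,h}`): the copy nodes together with one new root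
(`none`), which has the `c` copies of the tree root as its children. -/
abbrev GNode (d h c : ℕ) := Option (CopyNode d h c)

/-- The child relation of `G'_{d,h}` (edges directed from children to parents).  In
`G_{d,h}`, the children of `v[i]` are all `c` copies of each of the `d` tree children of
`v`, and the children of the new root are the `c` copies of the tree root.  `G'_{d,h}` is
obtained by deleting, for each internal tree node `v` and each copy `v[i]`
(`i ∈ Fin c`, `0`-based), the edges from the `i` smallest and the `c - 1 - i` largest
children of `v[i]` with respect to `<` (so `v[i]` keeps exactly `c(d-1) + 1` children):
the children of `v[i]` in `G_{d,h}`, listed in increasing `<` order, are `u_r[m]` at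
position `r*c + m` where `u_r` is tree child number `r` of `v`, and `v[i]` keeps exactly
the children at positions `i, …, (d-1)c + i`. -/
def gChild' (d h c : ℕ) : GNode d h c → GNode d h c → Prop
  | some u, some v =>
      (u.1.1 : ℕ) = (v.1.1 : ℕ) + 1 ∧ (u.1.2 : ℕ) / d = (v.1.2 : ℕ) ∧
      (v.2 : ℕ) ≤ ((u.1.2 : ℕ) % d) * c + (u.2 : ℕ) ∧
      ((u.1.2 : ℕ) % d) * c + (u.2 : ℕ) ≤ (d - 1) * c + (v.2 : ℕ)
  | some u, none => (u.1.1 : ℕ) = 0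
  | none, _ => False

/-! Black pebbling on a DAG whose edges are directed from children to parents
(`child u v` means `u` is a child of `v`; a leaf is a node with no children). -/

/-- A legal black pebbling move from configuration `C` to `C'`:
place a pebble on a leaf; remove a pebble from any node; or, if all children of a node
carry pebbles, place a pebble on it or slide onto it a pebble from one of its children. -/
def BlackStep {V : Type} (child : V → V → Prop) (C C' : Set V) : Prop :=
  (∃ v, (∀ u, ¬ child u v) ∧ C' = insert v C) ∨
  (∃ v, C' = C \ {v}) ∨
  (∃ v, (∀ u, child u v → u ∈ C) ∧
     (C' = insert v C ∨ ∃ u, child u v ∧ u ∈ C ∧ C' = insert v (C \ {u})))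

/-- A black pebbling of the DAG `(V, child)`: a finite sequence of configurations starting
from the empty configuration, each obtained from the previous by a legal move. -/
structure BlackPebbling (V : Type) (child : V → V → Prop) where
  T : ℕ
  cfg : ℕ → Set V
  start : cfg 0 = ∅
  step : ∀ t < T, BlackStep child (cfg t) (cfg (t + 1))

/-- The pebbling places a pebble on `u` at some point. -/
def BlackPebbling.Pebbles {V : Type} {child : V → V → Prop}
    (P : BlackPebbling V child) (u : V) : Prop :=
  ∃ t ≤ P.T, u ∈ P.cfg t

/-- The pebbling never has more than `p` pebbles simultaneously on the graph. -/
def BlackPebbling.CostLE {V : Type} {child : V → V → Prop}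
    (P : BlackPebbling V child) (p : ℕ) : Prop :=
  ∀ t ≤ P.T, (P.cfg t).ncard ≤ p

/-!
Upper bound: pebble the `c(d-1)+1` children of `v` one after another, keeping the pebbles on
the finished ones, then slide one of them onto `v`; by induction on the height this uses
`c(d-1)(l-1)+1` pebbles.

Lower bound: take the last moment before `v` is first pebbled at which a pebble-free path still
runs from a leaf up to `v`. It passes through a child `u` that is pebbled later, so by induction
the region below `u` carries `c(d-1)(l-2)+1` pebbles at some later moment. Then `v` is still
unpebbled but every path to it is blocked, so each of the other `c(d-1)` children of `v` has a
pebble on its leftmost or rightmost descending spine; taking the spine that points away from `u`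
makes these pebbles distinct and places them outside the region below `u`.

Siblings have the same height, hence the same price.
-/

theorem Nat.exists_first_of_le {p : ℕ → Prop} {a b : ℕ} (hab : a ≤ b) (ha : ¬ p a) (hb : p b) :
    ∃ e, a ≤ e ∧ e < b ∧ p (e + 1) ∧ ∀ t, a ≤ t → t ≤ e → ¬ p t := by
  classical
  have hex : ∃ k, p (a + k) := ⟨b - a, by rwa [Nat.add_sub_cancel' hab]⟩
  have hk : Nat.find hex ≠ 0 := fun h0 => ha (by simpa [h0] using Nat.find_spec hex)
  have hkb : Nat.find hex ≤ b - a := Nat.find_min' hex (by rwa [Nat.add_sub_cancel' hab])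
  refine ⟨a + Nat.find hex - 1, by omega, by omega, ?_, fun t hat hte hpt => ?_⟩
  · rw [show a + Nat.find hex - 1 + 1 = a + Nat.find hex by omega]
    exact Nat.find_spec hex
  · exact Nat.find_min hex (m := t - a) (by omega) (by rwa [Nat.add_sub_cancel' hat])

theorem Nat.exists_last_of_le {p : ℕ → Prop} {a b : ℕ} (hab : a ≤ b) (ha : p a) (hb : ¬ p b) :
    ∃ s, a ≤ s ∧ s < b ∧ p s ∧ ∀ t, s < t → t ≤ b → ¬ p t := by
  induction b, hab using Nat.le_induction with
  | base => exact absurd ha hb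
  | succ b hab ih =>
    by_cases hpb : p b
    · exact ⟨b, hab, b.lt_succ_self, hpb, fun t h₁ h₂ => by rwa [show t = b + 1 by omega]⟩
    · obtain ⟨s, has, hsb, hps, hlast⟩ := ih hpb
      refine ⟨s, has, by omega, hps, fun t h₁ h₂ => ?_⟩
      rcases Nat.lt_or_ge t (b + 1) with h | h
      · exact hlast t h₁ (by omega)
      · rwa [show t = b + 1 by omega]

theorem Nat.mul_add_eq_mul_add_iff {a b r s n : ℕ} (hr : r < n) (hs : s < n) :
    a * n + r = b * n + s ↔ a = b ∧ r = s := by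
  have hn : 0 < n := by omega
  refine ⟨fun h => ?_, fun ⟨rfl, rfl⟩ => rfl⟩
  obtain ⟨ha, har⟩ := (Nat.div_mod_unique hn).2 ⟨(by ring : r + n * a = a * n + r), hr⟩
  obtain ⟨hb, hbs⟩ := (Nat.div_mod_unique hn).2 ⟨(by ring : s + n * b = b * n + s), hs⟩
  rw [h] at ha har
  exact ⟨ha.symm.trans hb, har.symm.trans hbs⟩

theorem Nat.pow_succ_sub_one {d : ℕ} (hd : 0 < d) (t : ℕ) :
    d ^ (t + 1) - 1 = (d - 1) * d ^ t + (d ^ t - 1) := by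
  have := Nat.one_le_pow t d hd
  zify [hd, this, Nat.one_le_pow (t + 1) d hd]
  ring

section Pebbling

variable {V : Type} {child : V → V → Prop}

inductive OpenPath (child : V → V → Prop) (C : Set V) : V → Prop
  | leaf {v : V} : (∀ u, ¬ child u v) → v ∉ C → OpenPath child C v
  | cons {u v : V} : child u v → v ∉ C → OpenPath child C u → OpenPath child C v

theorem OpenPath.not_mem {C : Set V} {v : V} : OpenPath child C v → v ∉ C
  | .leaf _ hv => hv
  | .cons _ hv _ => hv

theorem OpenPath.exists_child {C : Set V} {v : V} (hv : OpenPath child C v)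
    (hu : ∃ u, child u v) : ∃ u, child u v ∧ OpenPath child C u := by
  cases hv with
  | leaf hleaf _ => exact absurd hu.choose_spec (hleaf _)
  | cons hchild _ hopen => exact ⟨_, hchild, hopen⟩

theorem not_openPath_of_forall_child_mem {C : Set V} {v : V} (hu : ∃ u, child u v)
    (hC : ∀ u, child u v → u ∈ C) : ¬ OpenPath child C v := fun hv =>
  let ⟨u, hu, hopen⟩ := hv.exists_child hu
  hopen.not_mem (hC u hu)

theorem BlackStep.forall_child_mem {C C' : Set V} {v : V} (hs : BlackStep child C C')
    (hv : v ∉ C) (hv' : v ∈ C') (hu : ∃ u, child u v) : ∀ u, child u v → u ∈ C := by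
  rcases hs with ⟨w, hw, rfl⟩ | ⟨w, rfl⟩ | ⟨w, hw, hC'⟩
  · obtain rfl : v = w := (Set.mem_insert_iff.mp hv').resolve_right hv
    exact absurd hu.choose_spec (hw _)
  · exact absurd hv'.1 hv
  · obtain rfl : v = w := by
      rcases hC' with rfl | ⟨u, -, -, rfl⟩
      · exact (Set.mem_insert_iff.mp hv').resolve_right hv
      · exact (Set.mem_insert_iff.mp hv').resolve_right fun h => hv h.1
    exact hw

def BlackPebbling.snoc (P : BlackPebbling V child) (C : Set V)
    (h : BlackStep child (P.cfg P.T) C) : BlackPebbling V child where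
  T := P.T + 1
  cfg t := if t ≤ P.T then P.cfg t else C
  start := by simp [P.start]
  step t ht := by
    rcases Nat.lt_or_ge t P.T with htT | htT
    · simpa [htT.le, Nat.succ_le_of_lt htT] using P.step t htT
    · obtain rfl : t = P.T := by omega
      simpa using h

def ReachWithin (child : V → V → Prop) (b : ℕ) (C C' : Set V) : Prop :=
  C.ncard ≤ b ∧ Relation.ReflTransGen (fun X Y => BlackStep child X Y ∧ Y.ncard ≤ b) C C'

namespace ReachWithin

variable {b b' : ℕ} {C C' C'' : Set V}

theorem refl (h : C.ncard ≤ b) : ReachWithin child b C C := ⟨h, .refl⟩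

theorem trans (h₁ : ReachWithin child b C C') (h₂ : ReachWithin child b C' C'') :
    ReachWithin child b C C'' :=
  ⟨h₁.1, h₁.2.trans h₂.2⟩

theorem mono (hb : b ≤ b') (h : ReachWithin child b C C') : ReachWithin child b' C C' :=
  ⟨h.1.trans hb, Relation.ReflTransGen.mono (fun _ _ hs => ⟨hs.1, hs.2.trans hb⟩) _ _ h.2⟩

theorem single (h : C.ncard ≤ b) (hs : BlackStep child C C') (h' : C'.ncard ≤ b) :
    ReachWithin child b C C' :=
  ⟨h, .single ⟨hs, h'⟩⟩

theorem exists_pebbling (h : ReachWithin child b ∅ C) :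
    ∃ P : BlackPebbling V child, P.cfg P.T = C ∧ P.CostLE b := by
  obtain ⟨hb, hr⟩ := h
  induction hr with
  | refl => exact ⟨⟨0, fun _ => ∅, rfl, fun t ht => absurd ht t.not_lt_zero⟩, rfl, fun _ _ => hb⟩
  | tail _ hs ih =>
    obtain ⟨P, hPT, hP⟩ := ih
    refine ⟨P.snoc _ (hPT ▸ hs.1), by simp [BlackPebbling.snoc], fun t ht => ?_⟩
    simp only [BlackPebbling.snoc]
    split_ifs with htT
    exacts [hP t htT, hs.2]

theorem union_finset {B : ℕ} {F : Finset V}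
    (hF : ∀ u ∈ F, ∀ C : Set V, ReachWithin child (C.ncard + (B + 1)) C (insert u C))
    (C : Set V) : ReachWithin child (C.ncard + (F.card + B)) C (C ∪ F) := by
  classical
  induction F using Finset.induction_on with
  | empty => simpa using refl (le_add_right le_rfl)
  | insert a F ha ih =>
    have hcard : (C ∪ F).ncard ≤ C.ncard + F.card :=
      (Set.ncard_union_le _ _).trans_eq (by rw [Set.ncard_coe_finset])
    rw [Finset.card_insert_of_notMem ha, Finset.coe_insert, Set.union_insert]
    exact ((ih fun u hu => hF u (Finset.mem_insert_of_mem hu)).mono (by omega)).trans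
      ((hF a (Finset.mem_insert_self a F) (C ∪ F)).mono (by omega))

variable [Finite V]

theorem sdiff (D : Set V) (h : C.ncard ≤ b) : ReachWithin child b C (C \ D) := by
  classical
  obtain ⟨F, rfl⟩ := D.toFinite.exists_finset_coe
  induction F using Finset.induction_on generalizing C with
  | empty => simpa using refl h
  | insert a F _ ih =>
    have ha : (C \ {a}).ncard ≤ b := (Set.ncard_le_ncard Set.sdiff_subset).trans h
    rw [Finset.coe_insert, Set.insert_eq, ← Set.sdiff_sdiff]
    exact (single h (Or.inr (Or.inl ⟨a, rfl⟩)) ha).trans (ih ha)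

/-- After pebbling the children one by one, a child pebble that was not in `C` is slid onto `v`,
so `v` itself costs no extra pebble. -/
theorem insert_of_children {v : V} {B : ℕ} {F : Finset V} (hF : ∀ u, child u v ↔ u ∈ F)
    (hne : F.Nonempty) (hvv : ¬ child v v)
    (hchild : ∀ u ∈ F, ∀ C : Set V, ReachWithin child (C.ncard + (B + 1)) C (insert u C))
    (C : Set V) : ReachWithin child (C.ncard + (F.card + B)) C (insert v C) := by
  have hall : ∀ u, child u v → u ∈ C ∪ F := fun u hu => Or.inr ((hF u).1 hu)
  have hcard : (C ∪ F).ncard ≤ C.ncard + F.card :=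
    (Set.ncard_union_le _ _).trans_eq (by rw [Set.ncard_coe_finset])
  have hF₁ := hne.card_pos
  have hfill := union_finset hchild C
  by_cases hFC : (F : Set V) ⊆ C
  · rw [Set.union_eq_self_of_subset_right hFC] at hfill hall
    exact hfill.trans (single (by omega) (Or.inr (Or.inr ⟨v, hall, Or.inl rfl⟩))
      (by have := Set.ncard_insert_le v C; omega))
  · obtain ⟨y, hyF, hyC⟩ := Set.not_subset.mp hFC
    have hy : y ∈ C ∪ F := Or.inr hyF
    have hslid : (insert v ((C ∪ F) \ {y})).ncard ≤ C.ncard + (F.card + B) := by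
      have := Set.ncard_insert_le v ((C ∪ F) \ {y})
      have := Set.ncard_sdiff_singleton_of_mem hy
      have := (Set.ncard_pos (Set.toFinite _)).2 ⟨y, hy⟩
      omega
    have hclean : insert v ((C ∪ F) \ {y}) \ ((F : Set V) \ C) = insert v C := by
      have hvF : v ∉ (F : Set V) := fun h => hvv ((hF v).2 h)
      ext w
      simp only [Set.mem_sdiff, Set.mem_insert_iff, Set.mem_union, Set.mem_singleton_iff]
      constructor
      · rintro ⟨rfl | ⟨hw | hw, -⟩, hw'⟩ <;> tauto
      · rintro (rfl | hw)
        · tauto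
        · exact ⟨Or.inr ⟨Or.inl hw, fun h => hyC (h ▸ hw)⟩, fun h => h.2 hw⟩
    refine hfill.trans ((single (by omega)
      (Or.inr (Or.inr ⟨v, hall, Or.inr ⟨y, (hF y).2 hyF, hy, rfl⟩⟩)) hslid).trans ?_)
    rw [← hclean]
    exact sdiff _ hslid

end ReachWithin

theorem BlackPebbling.exists_price_le_ncard_inter [Finite V] (P : BlackPebbling V child)
    (R : V → Set V) (price : V → ℕ) (hself : ∀ v, v ∈ R v)
    (hmono : ∀ {u v}, child u v → R u ⊆ R v) (hleaf : ∀ v, (∀ u, ¬ child u v) → price v ≤ 1)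
    (hsep : ∀ {u v C}, child u v → v ∉ C → ¬ OpenPath child C v →
      price v ≤ price u + (C ∩ (R v \ R u)).ncard)
    {v : V} {a b : ℕ} (hab : a ≤ b) (hbT : b ≤ P.T) (hopen : OpenPath child (P.cfg a) v)
    (hv : v ∈ P.cfg b) : ∃ τ, a < τ ∧ τ ≤ b ∧ price v ≤ (P.cfg τ ∩ R v).ncard := by
  obtain ⟨e, hae, heb, hve, hvnot⟩ :=
    Nat.exists_first_of_le (p := fun t => v ∈ P.cfg t) hab hopen.not_mem hv
  by_cases hinternal : ∃ u, child u v
  swap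
  · refine ⟨e + 1, by omega, heb, (hleaf v (not_exists.mp hinternal)).trans ?_⟩
    exact (Set.ncard_pos (Set.toFinite _)).2 ⟨v, hve, hself v⟩
  have hchildren := (P.step e (by omega)).forall_child_mem (hvnot e hae le_rfl) hve hinternal
  obtain ⟨s, has, hse, hopens, hclosed⟩ :=
    Nat.exists_last_of_le (p := fun t => OpenPath child (P.cfg t) v) hae hopen
      (not_openPath_of_forall_child_mem hinternal hchildren)
  obtain ⟨u, hu, hopenu⟩ := hopens.exists_child hinternal
  obtain ⟨τ, hsτ, hτe, hprice⟩ := P.exists_price_le_ncard_inter R price hself hmono hleaf hsep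
    hse.le (by omega) hopenu (hchildren u hu)
  refine ⟨τ, by omega, by omega, ?_⟩
  have hsplit := Set.ncard_inter_add_ncard_sdiff_eq_ncard (P.cfg τ ∩ R v) (R u)
  rw [Set.inter_assoc, Set.inter_eq_right.mpr (hmono hu), Set.inter_sdiff_assoc] at hsplit
  have := hsep hu (hvnot τ (by omega) hτe) (hclosed τ hsτ hτe)
  omega
termination_by b - a

end Pebbling

namespace GNode

variable {d h c : ℕ}

theorem copyNode_ext {x y : CopyNode d h c} (h₁ : (x.1.1 : ℕ) = y.1.1)
    (h₂ : (x.1.2 : ℕ) = y.1.2) (h₃ : (x.2 : ℕ) = y.2) : x = y := by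
  obtain ⟨⟨⟨_, _⟩, ⟨_, _⟩⟩, ⟨_, _⟩⟩ := x
  obtain ⟨⟨⟨_, _⟩, ⟨_, _⟩⟩, ⟨_, _⟩⟩ := y
  simp only at h₁ h₂ h₃
  subst h₁ h₂ h₃
  rfl

/-- The position `r * c + i` of `u = w[i]`, `w` tree child number `r`, among the children of its
parent in `G_{d,h}`; `gChild'` keeps the window of positions `[j, (d-1)c + j]` below `v[j]`. -/
def pos (u : CopyNode d h c) : ℕ := ((u.1.2 : ℕ) % d) * c + u.2

theorem not_gChild'_none {v : GNode d h c} : ¬ gChild' d h c none v := by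
  cases v <;> exact id

theorem not_gChild'_of_le {x : CopyNode d h c} (hx : h ≤ (x.1.1 : ℕ) + 1) :
    ∀ u, ¬ gChild' d h c u (some x)
  | none, hu => hu
  | some u, hu => by have := u.1.1.isLt; have := hu.1; omega

theorem exists_child_at (hd : 0 < d) {x : CopyNode d h c} (hx : (x.1.1 : ℕ) + 1 < h) {q : ℕ}
    (hq₁ : (x.2 : ℕ) ≤ q) (hq₂ : q ≤ (d - 1) * c + x.2) :
    ∃ u : CopyNode d h c, gChild' d h c (some u) (some x) ∧
      (u.1.2 : ℕ) = x.1.2 * d + q / c ∧ (u.2 : ℕ) = q % c ∧ pos u = q := by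
  have hc : 0 < c := x.2.pos
  have hqd : q / c < d := by
    have := x.2.isLt
    have := Nat.sub_one_mul d c
    have := Nat.le_mul_of_pos_left c hd
    exact Nat.div_lt_of_lt_mul (by rw [mul_comm]; omega)
  have hidx : (x.1.2 : ℕ) * d + q / c < d ^ ((x.1.1 : ℕ) + 1) := by
    rw [pow_succ, mul_comm _ d]
    exact Nat.mul_add_lt_mul_of_lt_of_lt x.1.2.isLt hqd
  have hdm := (Nat.div_mod_unique hd).2 ⟨(by ring : q / c + d * x.1.2 = x.1.2 * d + q / c), hqd⟩
  have hq : pos (⟨⟨⟨(x.1.1 : ℕ) + 1, hx⟩, ⟨_, hidx⟩⟩, ⟨q % c, Nat.mod_lt _ hc⟩⟩ :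
      CopyNode d h c) = q := by
    simp only [pos, hdm.2]; exact Nat.div_add_mod' q c
  exact ⟨_, ⟨rfl, hdm.1, hq₁.trans hq.ge, hq.le.trans hq₂⟩, rfl, rfl, hq⟩

/-- Copies of descendants of the tree node of `x`, with copy index at least that of `x` along the
left spine and at most it along the right spine: a region closed under children (`Cone.of_child`),
so it contains everything below `x` in `G'_{d,h}`. -/
def Cone (x y : CopyNode d h c) : Prop :=
  ∃ t r, (y.1.1 : ℕ) = x.1.1 + t ∧ (y.1.2 : ℕ) = x.1.2 * d ^ t + r ∧ r < d ^ t ∧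
    (r = 0 → (x.2 : ℕ) ≤ y.2) ∧ (r = d ^ t - 1 → (y.2 : ℕ) ≤ x.2)

theorem Cone.refl (x : CopyNode d h c) : Cone x x :=
  ⟨0, 0, rfl, by simp, by simp, fun _ => le_rfl, fun _ => le_rfl⟩

theorem Cone.of_child (hd : 0 < d) {u v y : CopyNode d h c}
    (huv : gChild' d h c (some u) (some v)) (hy : Cone u y) : Cone v y := by
  obtain ⟨hdepth, hdiv, hlo, hhi⟩ := huv
  obtain ⟨t, r, hyd, hyi, hr, hr₀, hr₁⟩ := hy
  set p := (u.1.2 : ℕ) % d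
  have hp : p < d := Nat.mod_lt _ hd
  have hdt : 0 < d ^ t := pow_pos hd t
  refine ⟨t + 1, p * d ^ t + r, by omega, ?_, ?_, fun h₀ => ?_, fun h₁ => ?_⟩
  · rw [hyi, ← Nat.div_add_mod' (u.1.2 : ℕ) d, hdiv, pow_succ]; ring
  · rw [pow_succ', mul_comm p]
    exact Nat.mul_add_lt_mul_of_lt_of_lt hp hr
  · have hp₀ : p = 0 := by
      rcases Nat.mul_eq_zero.mp (show p * d ^ t = 0 by omega) with h | h
      · exact h
      · omega
    rw [hp₀, zero_mul, zero_add] at hlo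
    exact hlo.trans (hr₀ (by omega))
  · rw [Nat.pow_succ_sub_one hd t, Nat.mul_add_eq_mul_add_iff hr (by omega)] at h₁
    rw [h₁.1] at hhi
    exact (hr₁ h₁.2).trans (by omega)

/-- Offset, inside the subtree of relative depth `t`, of its leftmost (`false`) or rightmost
(`true`) node. -/
def spineOffset (d : ℕ) (s : Bool) (t : ℕ) : ℕ := if s then d ^ t - 1 else 0

theorem spineOffset_lt (hd : 0 < d) (s : Bool) (t : ℕ) : spineOffset d s t < d ^ t := by
  have := pow_pos hd t
  cases s <;> simp [spineOffset] <;> omega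

theorem spineOffset_succ (hd : 0 < d) (s : Bool) (t : ℕ) :
    spineOffset d s (t + 1) = spineOffset d s t * d + spineOffset d s 1 := by
  cases s
  · simp [spineOffset]
  · simp only [spineOffset, if_true, pow_one, Nat.pow_succ_sub_one hd t]
    have := Nat.one_le_pow t d hd
    zify [hd, this]
    ring

def OnSpine (s : Bool) (w y : CopyNode d h c) : Prop :=
  (y.2 : ℕ) = w.2 ∧ ∃ t, (y.1.1 : ℕ) = w.1.1 + t ∧ (y.1.2 : ℕ) = w.1.2 * d ^ t + spineOffset d s t

theorem OnSpine.self (s : Bool) (w : CopyNode d h c) : OnSpine s w w :=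
  ⟨rfl, 0, rfl, by cases s <;> simp [spineOffset]⟩

theorem OnSpine.cone (hd : 0 < d) {s : Bool} {w y : CopyNode d h c} (hy : OnSpine s w y) :
    Cone w y :=
  let ⟨hcopy, t, hyd, hyi⟩ := hy
  ⟨t, _, hyd, hyi, spineOffset_lt hd s t, fun _ => hcopy.ge, fun _ => hcopy.le⟩

theorem OnSpine.exists_child (hd : 0 < d) {s : Bool} {w y : CopyNode d h c} (hy : OnSpine s w y)
    (hyh : (y.1.1 : ℕ) + 1 < h) :
    ∃ y', gChild' d h c (some y') (some y) ∧ OnSpine s w y' := by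
  obtain ⟨hcopy, t, hyd, hyi⟩ := hy
  have ho : spineOffset d s 1 < d := by simpa using spineOffset_lt hd s 1
  have hq := (Nat.div_mod_unique y.2.pos).2
    ⟨(by ring : (y.2 : ℕ) + c * spineOffset d s 1 = spineOffset d s 1 * c + y.2), y.2.isLt⟩
  obtain ⟨y', hy', hy'i, hy'c, -⟩ := exists_child_at hd hyh (q := spineOffset d s 1 * c + y.2)
    (by omega) (by have := Nat.mul_le_mul_right c (Nat.le_sub_one_of_lt ho); omega)
  refine ⟨y', hy', by rw [hy'c, hq.2, hcopy], t + 1, by rw [hy'.1, hyd]; ring, ?_⟩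
  rw [hy'i, hq.1, hyi, spineOffset_succ hd s t, pow_succ]
  ring

/-- A left spine meets only the cones of siblings to its left, a right spine only those to its
right. -/
theorem OnSpine.pos_le_of_cone (hd : 0 < d) {s : Bool} {w w' y : CopyNode d h c}
    (hww' : (w.1.1 : ℕ) = w'.1.1)
    (hy : OnSpine s w y) (hy' : Cone w' y) : if s then pos w ≤ pos w' else pos w' ≤ pos w := by
  obtain ⟨hcopy, t, hyd, hyi⟩ := hy
  obtain ⟨t', r, hyd', hyi', hr, hr₀, hr₁⟩ := hy'
  obtain rfl : t = t' := by omega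
  obtain ⟨hidx, hoff⟩ := (Nat.mul_add_eq_mul_add_iff (spineOffset_lt hd s t) hr).1
    (hyi.symm.trans hyi')
  simp only [pos, hidx]
  cases s
  · exact Nat.add_le_add_left ((hr₀ hoff.symm).trans hcopy.le) _
  · exact Nat.add_le_add_left (hcopy.symm.le.trans (hr₁ hoff.symm)) _

theorem openPath_of_onSpine (hd : 0 < d) {s : Bool} {w : CopyNode d h c}
    {C : Set (GNode d h c)} (hfree : ∀ y, OnSpine s w y → some y ∉ C) {y : CopyNode d h c}
    (hy : OnSpine s w y) : OpenPath (gChild' d h c) C (some y) := by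
  by_cases hyh : (y.1.1 : ℕ) + 1 < h
  · obtain ⟨y', hy'y, hy'⟩ := hy.exists_child hd hyh
    have hdepth := hy'y.1
    exact .cons hy'y (hfree y hy) (openPath_of_onSpine hd hfree hy')
  · exact .leaf (not_gChild'_of_le (by omega)) (hfree y hy)
termination_by h - y.1.1

theorem exists_onSpine_mem (hd : 0 < d) {x w : CopyNode d h c} {C : Set (GNode d h c)}
    (hw : gChild' d h c (some w) (some x)) (hx : some x ∉ C)
    (hclosed : ¬ OpenPath (gChild' d h c) C (some x)) (s : Bool) :
    ∃ y, OnSpine s w y ∧ some y ∈ C := by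
  by_contra! hfree
  exact hclosed (.cons hw hx (openPath_of_onSpine hd hfree (.self s w)))

def region : GNode d h c → Set (GNode d h c)
  | some x => some '' {y | Cone x y}
  | none => Set.univ

theorem mem_region (x : GNode d h c) : x ∈ region x := by
  cases x with
  | none => trivial
  | some x => exact ⟨x, Cone.refl x, rfl⟩

theorem region_mono (hd : 0 < d) {u v : GNode d h c} (huv : gChild' d h c u v) :
    region u ⊆ region v := by
  match u, v, huv with
  | _, none, _ => exact Set.subset_univ _
  | some _, some _, huv => exact Set.image_mono fun _ => Cone.of_child hd huv

theorem OnSpine.ne_of_pos_lt (hd : 0 < d) {p : ℕ} {w w' y y' : CopyNode d h c}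
    (hww' : (w.1.1 : ℕ) = w'.1.1) (hlt : pos w < pos w')
    (hy : OnSpine (decide (p < pos w)) w y) (hy' : OnSpine (decide (p < pos w')) w' y') :
    y ≠ y' := by
  rintro rfl
  by_cases hside : p < pos w
  · have := hy'.pos_le_of_cone hd hww'.symm (hy.cone hd)
    simp only [show p < pos w' by omega, decide_true, if_true] at this
    omega
  · have := hy.pos_le_of_cone hd hww' (hy'.cone hd)
    simp only [hside, decide_false, Bool.false_eq_true, if_false] at this
    omega

theorem OnSpine.not_cone (hd : 0 < d) {w w₀ y : CopyNode d h c} (hww₀ : (w.1.1 : ℕ) = w₀.1.1)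
    (hne : pos w ≠ pos w₀) (hy : OnSpine (decide (pos w₀ < pos w)) w y) : ¬ Cone w₀ y := by
  intro hy₀
  have := hy.pos_le_of_cone hd hww₀ hy₀
  split_ifs at this with hside <;> simp only [decide_eq_true_eq] at hside
    <;> omega

theorem sub_one_mul_le_ncard (hd : 0 < d) {x w₀ : CopyNode d h c} {C : Set (GNode d h c)}
    (hw₀ : gChild' d h c (some w₀) (some x)) (hx : some x ∉ C)
    (hclosed : ¬ OpenPath (gChild' d h c) C (some x)) :
    (d - 1) * c ≤ (C ∩ (region (some x) \ region (some w₀))).ncard := by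
  have hxh : (x.1.1 : ℕ) + 1 < h := hw₀.1 ▸ w₀.1.1.isLt
  have hQ : ((Finset.Icc (x.2 : ℕ) ((d - 1) * c + x.2)).erase (pos w₀)).card = (d - 1) * c := by
    rw [Finset.card_erase_of_mem (show pos w₀ ∈ Finset.Icc _ _ from Finset.mem_Icc.2 hw₀.2.2),
      Nat.card_Icc]
    omega
  set Q := (Finset.Icc (x.2 : ℕ) ((d - 1) * c + x.2)).erase (pos w₀)
  have hsib : ∀ q ∈ Q, ∃ w y, gChild' d h c (some w) (some x) ∧ pos w = q ∧
      OnSpine (decide (pos w₀ < pos w)) w y ∧ some y ∈ C := by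
    intro q hq
    obtain ⟨hq₁, hq₂⟩ := Finset.mem_Icc.1 (Finset.mem_of_mem_erase hq)
    obtain ⟨w, hw, -, -, hpos⟩ := exists_child_at hd hxh hq₁ hq₂
    obtain ⟨y, hy, hyC⟩ := exists_onSpine_mem hd hw hx hclosed (decide (pos w₀ < pos w))
    exact ⟨w, y, hw, hpos, hy, hyC⟩
  have : Nonempty (CopyNode d h c) := ⟨x⟩
  choose! w y hw hpos hy hyC using hsib
  have hdepth : ∀ q ∈ Q, ((w q).1.1 : ℕ) = w₀.1.1 := fun q hq => (hw q hq).1.trans hw₀.1.symm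
  have hne : ∀ q ∈ Q, ∀ q' ∈ Q, q < q' → y q ≠ y q' := fun q hq q' hq' hlt =>
    (hy q hq).ne_of_pos_lt hd ((hdepth q hq).trans (hdepth q' hq').symm)
      (by rwa [hpos q hq, hpos q' hq']) (hy q' hq')
  rw [← hQ, ← Set.ncard_coe_finset]
  refine Set.ncard_le_ncard_of_injOn (fun q => some (y q)) (fun q hq => ⟨hyC q hq, ?_, ?_⟩) ?_
  · exact ⟨y q, ((hy q hq).cone hd).of_child hd (hw q hq), rfl⟩
  · rintro ⟨y', hy', hyy'⟩
    obtain rfl := Option.some_injective _ hyy'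
    exact (hy q hq).not_cone hd (hdepth q hq) (by rw [hpos q hq]; exact (Finset.mem_erase.1 hq).1)
      hy'
  · intro q hq q' hq' hqq'
    have hyy := Option.some_injective _ hqq'
    rcases lt_trichotomy q q' with hlt | heq | hgt
    exacts [absurd hyy (hne q hq q' hq' hlt), heq, absurd hyy.symm (hne q' hq' q hq hgt)]

/-- `c(d-1)(l-1) + 1` for a node of height `l = h - depth`; the new root gets `0`, so the
hypotheses of `BlackPebbling.exists_price_le_ncard_inter` hold trivially there. -/
def price : GNode d h c → ℕ
  | some x => c * (d - 1) * (h - 1 - x.1.1) + 1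
  | none => 0

theorem price_le_one_of_leaf (hd : 0 < d) :
    ∀ v : GNode d h c, (∀ u, ¬ gChild' d h c u v) → price v ≤ 1
  | none, _ => zero_le_one
  | some x, hleaf => by
    by_cases hxh : (x.1.1 : ℕ) + 1 < h
    · obtain ⟨w, hw, -⟩ := exists_child_at hd hxh le_rfl (Nat.le_add_left _ _)
      exact absurd hw (hleaf _)
    · simp [price, show h - 1 - (x.1.1 : ℕ) = 0 by omega]

theorem price_le_price_add_ncard (hd : 0 < d) {u v : GNode d h c} {C : Set (GNode d h c)}
    (huv : gChild' d h c u v) (hv : v ∉ C) (hclosed : ¬ OpenPath (gChild' d h c) C v) :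
    price v ≤ price u + (C ∩ (region v \ region u)).ncard := by
  match u, v, huv with
  | _, none, _ => exact Nat.zero_le _
  | some w₀, some x, huv =>
    have hcount := sub_one_mul_le_ncard hd huv hv hclosed
    have hheight : h - 1 - (x.1.1 : ℕ) = (h - 1 - w₀.1.1) + 1 := by
      have := w₀.1.1.isLt; have := huv.1; omega
    simp only [price]
    rw [hheight, mul_add, mul_one, mul_comm c]
    omega

theorem pos_injOn (x : CopyNode d h c) : Set.InjOn pos {w | gChild' d h c (some w) (some x)} := by
  intro w hw w' hw' hpos
  obtain ⟨hr, hi⟩ := (Nat.mul_add_eq_mul_add_iff w.2.isLt w'.2.isLt).1 hpos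
  refine copyNode_ext (hw.1.trans hw'.1.symm) ?_ hi
  rw [← Nat.div_add_mod' (w.1.2 : ℕ) d, ← Nat.div_add_mod' (w'.1.2 : ℕ) d, hw.2.1, hw'.2.1, hr]

theorem ncard_children_le (x : CopyNode d h c) :
    {u | gChild' d h c u (some x)}.ncard ≤ (d - 1) * c + 1 := by
  have hsome : {u | gChild' d h c u (some x)} = some '' {w | gChild' d h c (some w) (some x)} := by
    ext (_ | w)
    · simp [not_gChild'_none]
    · simp
  rw [hsome, Set.ncard_image_of_injective _ (Option.some_injective _)]
  calc _ ≤ (Finset.Icc (x.2 : ℕ) ((d - 1) * c + x.2) : Set ℕ).ncard :=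
        Set.ncard_le_ncard_of_injOn pos (fun w hw => Finset.mem_Icc.2 hw.2.2) (pos_injOn x)
    _ = _ := by rw [Set.ncard_coe_finset, Nat.card_Icc]; omega

theorem reachWithin_insert (hd : 0 < d) (x : CopyNode d h c) (C : Set (GNode d h c)) :
    ReachWithin (gChild' d h c) (C.ncard + price (some x)) C (insert (some x) C) := by
  by_cases hxh : (x.1.1 : ℕ) + 1 < h
  · set F := (Set.toFinite {u | gChild' d h c u (some x)}).toFinset
    have hF : ∀ u, gChild' d h c u (some x) ↔ u ∈ F := fun u => by simp [F]
    obtain ⟨w₀, hw₀, -⟩ := exists_child_at hd hxh le_rfl (Nat.le_add_left _ _)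
    have hchild : ∀ u ∈ F, ∀ C' : Set (GNode d h c), ReachWithin (gChild' d h c)
        (C'.ncard + (c * (d - 1) * (h - 1 - ((x.1.1 : ℕ) + 1)) + 1)) C' (insert u C') := by
      intro u hu C'
      obtain ⟨w, hw, rfl⟩ : ∃ w, gChild' d h c (some w) (some x) ∧ some w = u := by
        match u, (hF u).2 hu with
        | some w, hw => exact ⟨w, hw, rfl⟩
      have hdepth := hw.1
      have hrec := reachWithin_insert hd w C'
      rwa [price, hdepth] at hrec
    have hcard : F.card ≤ (d - 1) * c + 1 := by
      rw [← Set.ncard_eq_toFinset_card]; exact ncard_children_le x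
    refine (ReachWithin.insert_of_children hF ⟨_, (hF _).1 hw₀⟩ (fun h => by have := h.1; omega)
      hchild C).mono ?_
    have hheight : h - 1 - (x.1.1 : ℕ) = (h - 1 - ((x.1.1 : ℕ) + 1)) + 1 := by omega
    simp only [price]
    rw [hheight, mul_add, mul_one, mul_comm c]
    omega
  · refine .single (Nat.le_add_right _ _) (Or.inl ⟨some x, not_gChild'_of_le (by omega), rfl⟩) ?_
    have := Set.ncard_insert_le (some x) C
    simp only [price]
    omega
termination_by h - x.1.1

theorem exists_pebbling (hd : 0 < d) (x : CopyNode d h c) :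
    ∃ P : BlackPebbling (GNode d h c) (gChild' d h c),
      P.Pebbles (some x) ∧ P.CostLE (price (some x)) := by
  have hreach := reachWithin_insert hd x ∅
  rw [Set.ncard_empty, zero_add] at hreach
  obtain ⟨P, hPT, hP⟩ := hreach.exists_pebbling
  exact ⟨P, ⟨P.T, le_rfl, hPT ▸ Set.mem_insert _ _⟩, hP⟩

theorem exists_price_le_ncard (hd : 0 < d) (x : CopyNode d h c)
    (P : BlackPebbling (GNode d h c) (gChild' d h c)) (hx : P.Pebbles (some x)) :
    ∃ t ≤ P.T, price (some x) ≤ (P.cfg t).ncard := by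
  obtain ⟨b, hb, hxb⟩ := hx
  have hopen : OpenPath (gChild' d h c) (P.cfg 0) (some x) :=
    P.start ▸ openPath_of_onSpine hd (fun _ _ => Set.notMem_empty _) (.self false x)
  obtain ⟨τ, -, hτ, hprice⟩ := P.exists_price_le_ncard_inter region price mem_region
    (region_mono hd) (price_le_one_of_leaf hd) (price_le_price_add_ncard hd) (Nat.zero_le b) hb
    hopen hxb
  exact ⟨τ, hτ.trans hb, hprice.trans (Set.ncard_le_ncard Set.inter_subset_left)⟩

theorem exists_pebbling_iff (hd : 0 < d) (x : CopyNode d h c) (N : ℕ) :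
    (∃ P : BlackPebbling (GNode d h c) (gChild' d h c), P.Pebbles (some x) ∧ P.CostLE N) ↔
      price (some x) ≤ N :=
  ⟨fun ⟨P, hx, hN⟩ => let ⟨t, ht, hle⟩ := exists_price_le_ncard hd x P hx; hle.trans (hN t ht),
    fun hN => let ⟨P, hx, hP⟩ := exists_pebbling hd x; ⟨P, hx, fun t ht => (hP t ht).trans hN⟩⟩

theorem exists_eq_some_of_siblings {u₁ u₂ v : GNode d h c} (h₁ : gChild' d h c u₁ v)
    (h₂ : gChild' d h c u₂ v) :
    ∃ x₁ x₂ : CopyNode d h c, u₁ = some x₁ ∧ u₂ = some x₂ ∧ (x₁.1.1 : ℕ) = x₂.1.1 :=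
  match u₁, u₂, v, h₁, h₂ with
  | some x₁, some x₂, none, h₁, h₂ => ⟨x₁, x₂, rfl, rfl, h₁.trans h₂.symm⟩
  | some x₁, some x₂, some _, h₁, h₂ => ⟨x₁, x₂, rfl, rfl, h₁.1.trans h₂.1.symm⟩

end GNode

theorem stmt_14_general (d h c : ℕ) (hd : 2 ≤ d)
    (l : ℕ) (hl1 : 1 ≤ l) (hlh : l ≤ h) (u : CopyNode d h c) (hu : (u.1.1 : ℕ) = h - l) :
    ((∃ P : BlackPebbling (GNode d h c) (gChild' d h c),
        P.Pebbles (some u) ∧ P.CostLE (c * (d - 1) * (l - 1) + 1)) ∧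
     (∀ P : BlackPebbling (GNode d h c) (gChild' d h c),
        P.Pebbles (some u) → ∃ t ≤ P.T, c * (d - 1) * (l - 1) + 1 ≤ (P.cfg t).ncard)) ∧
    (∀ u₁ u₂ v : GNode d h c, gChild' d h c u₁ v → gChild' d h c u₂ v →
      ∀ N : ℕ,
        (∃ P : BlackPebbling (GNode d h c) (gChild' d h c), P.Pebbles u₁ ∧ P.CostLE N) ↔
        (∃ P : BlackPebbling (GNode d h c) (gChild' d h c), P.Pebbles u₂ ∧ P.CostLE N)) := by
  have hd₀ : 0 < d := by omega
  have hprice : GNode.price (some u) = c * (d - 1) * (l - 1) + 1 := by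
    rw [GNode.price, hu, show h - 1 - (h - l) = l - 1 by omega]
  refine ⟨⟨hprice ▸ GNode.exists_pebbling hd₀ u,
    fun P hP => hprice ▸ GNode.exists_price_le_ncard hd₀ u P hP⟩, ?_⟩
  intro u₁ u₂ v h₁ h₂ N
  obtain ⟨x₁, x₂, rfl, rfl, hx⟩ := GNode.exists_eq_some_of_siblings h₁ h₂
  rw [GNode.exists_pebbling_iff hd₀, GNode.exists_pebbling_iff hd₀, GNode.price, GNode.price, hx]

/-- For all `d ≥ 2`, `h ≥ 1`, `c ≥ 1`, every level `l` with `1 ≤ l ≤ h`, and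
every node `u` of `G'_{d,h}` of height `l` (i.e. a copy of a tree node at depth `h - l`),
the black pebbling cost of placing a pebble on `u`, starting from the empty configuration,
is exactly `c(d-1)(l-1) + 1`.  In particular, any two nodes of `G'_{d,h}` that are
children of a common node have equal black pebbling cost. -/
theorem stmt_14 (d h c : ℕ) (hd : 2 ≤ d) (hh : 1 ≤ h) (hc : 1 ≤ c)
    (l : ℕ) (hl1 : 1 ≤ l) (hlh : l ≤ h) (u : CopyNode d h c) (hu : (u.1.1 : ℕ) = h - l) :
    ((∃ P : BlackPebbling (GNode d h c) (gChild' d h c),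
        P.Pebbles (some u) ∧ P.CostLE (c * (d - 1) * (l - 1) + 1)) ∧
     (∀ P : BlackPebbling (GNode d h c) (gChild' d h c),
        P.Pebbles (some u) → ∃ t ≤ P.T, c * (d - 1) * (l - 1) + 1 ≤ (P.cfg t).ncard)) ∧
    (∀ u₁ u₂ v : GNode d h c, gChild' d h c u₁ v → gChild' d h c u₂ v →
      ∀ N : ℕ,
        (∃ P : BlackPebbling (GNode d h c) (gChild' d h c), P.Pebbles u₁ ∧ P.CostLE N) ↔
        (∃ P : BlackPebbling (GNode d h c) (gChild' d h c), P.Pebbles u₂ ∧ P.CostLE N)) :=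
  stmt_14_general d h c hd l hl1 hlh u hu
end

section
/- Let d ≥ 2, h ≥ 1 and c ≥ 1, and let u and u' be nodes of G'_{d,h} that are copies of internal nodes of T_d^h with u < u'. Then the smallest child of u (with respect to <) is not a child of u', and the largest child of u' is not a child of u. -/
/-! Both claims only concern a common child `w` of `u` and `u'`, which forces `u` and `u'` to
be copies `v[i]`, `v[i']` of the same tree node `v`, with `i < i'`. Listing the children of `v`
in increasing order, `v[i]` keeps the window of positions `i, …, (d-1)c + i`, and positions
are ordered like the children themselves. Hence the smallest child of `v[i]` sits at position
`i < i'`, outside the window of `v[i']`, and the largest child of `v[i']` sits at position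
`(d-1)c + i' > (d-1)c + i`, outside the window of `v[i]`. -/

namespace CopyNode

variable {d h c : ℕ}

def childPos (d c : ℕ) (w : CopyNode d h c) : ℕ :=
  ((w.1.2 : ℕ) % d) * c + (w.2 : ℕ)

theorem snd_le_childPos_of_gChild' {w v : CopyNode d h c}
    (hw : gChild' d h c (some w) (some v)) : (v.2 : ℕ) ≤ childPos d c w :=
  hw.2.2.1

theorem childPos_le_of_gChild' {w v : CopyNode d h c}
    (hw : gChild' d h c (some w) (some v)) : childPos d c w ≤ (d - 1) * c + v.2 :=
  hw.2.2.2

theorem fst_eq_of_gChild' {w v v' : CopyNode d h c}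
    (hv : gChild' d h c (some w) (some v)) (hv' : gChild' d h c (some w) (some v')) :
    v.1 = v'.1 := by
  obtain ⟨⟨⟨l, hl⟩, j, hj⟩, i⟩ := v
  obtain ⟨⟨⟨l', hl'⟩, j', hj'⟩, i'⟩ := v'
  obtain ⟨hlev, hpar, -⟩ := hv
  obtain ⟨hlev', hpar', -⟩ := hv'
  obtain rfl : l = l' := by simp only at hlev hlev'; omega
  obtain rfl : j = j' := by simp only at hpar hpar'; omega
  rfl

theorem snd_lt_of_copyLt_of_fst_eq {u u' : CopyNode d h c} (hfst : u.1 = u'.1)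
    (hlt : copyLt d h c u u') : (u.2 : ℕ) < u'.2 := by
  rcases hlt with hin | ⟨-, hi⟩
  · exact absurd hin (by rw [inorderLt, hfst]; exact lt_irrefl _)
  · exact hi

theorem copyLt_of_childPos_lt (hd : 0 < d) {v w w' : CopyNode d h c}
    (hw : gChild' d h c (some w) (some v)) (hw' : gChild' d h c (some w') (some v))
    (hpos : childPos d c w < childPos d c w') : copyLt d h c w w' := by
  obtain ⟨⟨⟨L, hL⟩, a, ha⟩, m⟩ := w
  obtain ⟨⟨⟨L', hL'⟩, a', ha'⟩, m'⟩ := w'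
  obtain ⟨hlev, hpar, -⟩ := hw
  obtain ⟨hlev', hpar', -⟩ := hw'
  simp only at hlev hpar hlev' hpar'
  obtain rfl : L = L' := by omega
  have hsplit : d * v.1.2 + a % d = a := hpar ▸ Nat.div_add_mod a d
  have hsplit' : d * v.1.2 + a' % d = a' := hpar' ▸ Nat.div_add_mod a' d
  simp only [childPos] at hpos
  rcases lt_trichotomy (a % d) (a' % d) with hr | hr | hr
  · left
    have haa' : a < a' := by omega
    simp only [inorderLt]
    gcongr
  · right
    obtain rfl : a = a' := by omega
    refine ⟨rfl, ?_⟩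
    exact Nat.lt_of_add_lt_add_left hpos
  · have hge : (a' % d + 1) * c ≤ a % d * c := Nat.mul_le_mul_right c hr
    nlinarith [m.isLt, m'.isLt]

theorem exists_gChild'_childPos (hd : 0 < d) {v : CopyNode d h c} (hv : (v.1.1 : ℕ) + 1 < h)
    {p : ℕ} (hlo : (v.2 : ℕ) ≤ p) (hhi : p ≤ (d - 1) * c + v.2) :
    ∃ w : CopyNode d h c, gChild' d h c (some w) (some v) ∧ childPos d c w = p := by
  obtain ⟨⟨⟨l, hl⟩, j, hj⟩, i, hi⟩ := v
  simp only at hv hlo hhi ⊢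
  have hc : 0 < c := by omega
  have hr : p / c < d := by
    rw [Nat.div_lt_iff_lt_mul hc]
    have : (d - 1) * c + c = d * c := by
      rw [← Nat.succ_mul, Nat.succ_eq_add_one, Nat.sub_add_cancel hd]
    omega
  have hchild : d * j + p / c < d ^ (l + 1) :=
    calc d * j + p / c < d * (j + 1) := by rw [Nat.mul_succ]; omega
      _ ≤ d * d ^ l := Nat.mul_le_mul_left d hj
      _ = d ^ (l + 1) := (pow_succ' d l).symm
  have hmod : (d * j + p / c) % d = p / c := by
    rw [Nat.mul_add_mod, Nat.mod_eq_of_lt hr]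
  refine ⟨⟨⟨⟨l + 1, hv⟩, d * j + p / c, hchild⟩, p % c, Nat.mod_lt p hc⟩, ?_, ?_⟩
  · refine ⟨rfl, ?_, ?_⟩
    · simp only
      rw [Nat.mul_add_div hd, Nat.div_eq_of_lt hr, add_zero]
    · simp only [hmod, Nat.div_add_mod' p c]
      exact ⟨hlo, hhi⟩
  · simp only [childPos, hmod, Nat.div_add_mod' p c]

theorem childPos_eq_of_no_smaller_child (hd : 0 < d) {v w : CopyNode d h c}
    (hv : (v.1.1 : ℕ) + 1 < h) (hw : gChild' d h c (some w) (some v))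
    (hmin : ∀ w' : CopyNode d h c, gChild' d h c (some w') (some v) → ¬ copyLt d h c w' w) :
    childPos d c w = v.2 := by
  obtain ⟨w₀, hw₀, hpos₀⟩ := exists_gChild'_childPos hd hv le_rfl (Nat.le_add_left _ _)
  refine le_antisymm (not_lt.mp fun hgt => hmin w₀ hw₀ ?_) (snd_le_childPos_of_gChild' hw)
  exact copyLt_of_childPos_lt hd hw₀ hw (hpos₀ ▸ hgt)

theorem childPos_eq_of_no_larger_child (hd : 0 < d) {v w : CopyNode d h c}
    (hv : (v.1.1 : ℕ) + 1 < h) (hw : gChild' d h c (some w) (some v))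
    (hmax : ∀ w' : CopyNode d h c, gChild' d h c (some w') (some v) → ¬ copyLt d h c w w') :
    childPos d c w = (d - 1) * c + v.2 := by
  obtain ⟨w₁, hw₁, hpos₁⟩ := exists_gChild'_childPos hd hv (Nat.le_add_left _ _) le_rfl
  refine le_antisymm (childPos_le_of_gChild' hw) (not_lt.mp fun hlt => hmax w₁ hw₁ ?_)
  exact copyLt_of_childPos_lt hd hw hw₁ (hpos₁ ▸ hlt)

end CopyNode

open CopyNode in
theorem stmt_15_general (d h c : ℕ) (hd : 2 ≤ d)
    (u u' : CopyNode d h c)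
    (hu : (u.1.1 : ℕ) + 1 < h) (hu' : (u'.1.1 : ℕ) + 1 < h)
    (hlt : copyLt d h c u u') :
    (∀ w : CopyNode d h c,
      gChild' d h c (some w) (some u) →
      (∀ w' : CopyNode d h c, gChild' d h c (some w') (some u) → ¬ copyLt d h c w' w) →
      ¬ gChild' d h c (some w) (some u')) ∧
    (∀ w : CopyNode d h c,
      gChild' d h c (some w) (some u') →
      (∀ w' : CopyNode d h c, gChild' d h c (some w') (some u') → ¬ copyLt d h c w w') →
      ¬ gChild' d h c (some w) (some u)) := by
  have hd₀ : 0 < d := by omega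
  constructor
  · intro w hw hmin hw'
    have hi := snd_lt_of_copyLt_of_fst_eq (fst_eq_of_gChild' hw hw') hlt
    have hpos := childPos_eq_of_no_smaller_child hd₀ hu hw hmin
    have hlo := snd_le_childPos_of_gChild' hw'
    omega
  · intro w hw' hmax hw
    have hi := snd_lt_of_copyLt_of_fst_eq (fst_eq_of_gChild' hw hw') hlt
    have hpos := childPos_eq_of_no_larger_child hd₀ hu' hw' hmax
    have hhi := childPos_le_of_gChild' hw
    omega

/-- Let `d ≥ 2`, `h ≥ 1`, `c ≥ 1`, and let `u < u'` be nodes of `G'_{d,h}`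
that are copies of internal nodes of `T_d^h`.  Then the smallest child of `u` (w.r.t. `<`,
i.e. any child of `u` no child of `u` is smaller than) is not a child of `u'`, and the
largest child of `u'` is not a child of `u`. -/
theorem stmt_15 (d h c : ℕ) (hd : 2 ≤ d) (hh : 1 ≤ h) (hc : 1 ≤ c)
    (u u' : CopyNode d h c)
    (hu : (u.1.1 : ℕ) + 1 < h) (hu' : (u'.1.1 : ℕ) + 1 < h)
    (hlt : copyLt d h c u u') :
    (∀ w : CopyNode d h c,
      gChild' d h c (some w) (some u) →
      (∀ w' : CopyNode d h c, gChild' d h c (some w') (some u) → ¬ copyLt d h c w' w) →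
      ¬ gChild' d h c (some w) (some u')) ∧
    (∀ w : CopyNode d h c,
      gChild' d h c (some w) (some u') →
      (∀ w' : CopyNode d h c, gChild' d h c (some w') (some u') → ¬ copyLt d h c w w') →
      ¬ gChild' d h c (some w) (some u)) :=
  stmt_15_general d h c hd u u' hu hu' hlt
end

section
/- Let d ≥ 2, h ≥ 1 and c ≥ 1, and let u and v be copy nodes of G'_{d,h} with u < v such that there is no directed path from u to v and no directed path from v to u in G'_{d,h}. Then the left-most path to u does not intersect any path from a leaf to v, and the right-most path to v does not intersect any path from a leaf to u. -/
/-- The order `<` on the nodes of `G'_{d,h}`, restricted to copy nodes. -/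
def gLt (d h c : ℕ) : GNode d h c → GNode d h c → Prop
  | some x, some y => copyLt d h c x y
  | _, _ => False

/-- `P` is a directed path in `(V, child)` from a leaf (a node with no children) to `u`:
a nonempty list of nodes starting at a leaf, ending at `u`, each consecutive pair related
by `child`. -/
def IsPathFromLeafTo {V : Type} (child : V → V → Prop) (P : List V) (u : V) : Prop :=
  P ≠ [] ∧ P.getLast? = some u ∧ (∀ w, P.head? = some w → ∀ x, ¬ child x w) ∧
    P.Chain' child

/-- `P` is the left-most path to `u` w.r.t. the order `lt`: the path from a leaf to `u`
obtained by repeatedly moving to the smallest child (each node of the path is the smallest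
child of its successor). -/
def IsLeftmostPathTo {V : Type} (lt : V → V → Prop) (child : V → V → Prop)
    (P : List V) (u : V) : Prop :=
  IsPathFromLeafTo child P u ∧ P.Chain' (fun a b => ∀ w, child w b → ¬ lt w a)

/-- `P` is the right-most path to `u` w.r.t. the order `lt`: the path from a leaf to `u`
obtained by repeatedly moving to the largest child. -/
def IsRightmostPathTo {V : Type} (lt : V → V → Prop) (child : V → V → Prop)
    (P : List V) (u : V) : Prop :=
  IsPathFromLeafTo child P u ∧ P.Chain' (fun a b => ∀ w, child w b → ¬ lt a w)


/-!
A copy `v[i]` of `G'_{d,h}` keeps exactly the children `w[m]` with `i ≤ r c + m ≤ (d - 1) c + i`,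
where `w` is tree child number `r` of `v`. Hence the smallest (largest) child of `v[i]` is the
`i`-th copy of the first (last) tree child of `v`, so the left-most path to `u` runs down the
left-most branch below `u` keeping the copy index of `u`, and the right-most path to `v` runs down
the right-most branch below `v` keeping the copy index of `v`. Along first-child edges the copy
index can only decrease upwards, along last-child edges only increase, and any path can be
redirected to start at a larger (smaller) copy of its first node, ending at a larger (smaller)
copy of its last node.

Suppose a node of the left-most path to `u` reaches `v`. If `v` lies below `u`, it is on the
left-most branch below `u` with copy index at most that of `u`, so `v ≤ u`. Otherwise `v` is a
proper ancestor of `u`, and `u < v` puts `u` into the first subtree of `v`. The path reaches the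
tree node of `u` in a copy of index at most that of `u`; redirecting the rest of it to start at
`u` raises the copy index before the last edge, which is a first-child edge into `v` and tolerates
this. So `u` reaches `v`. The right-most path is symmetric, with the later subtrees in place of
the first one.
-/

open Relation

theorem List.IsChain.and {α : Type*} {r s : α → α → Prop} {l : List α} (hr : l.IsChain r)
    (hs : l.IsChain s) : l.IsChain fun a b => r a b ∧ s a b :=
  isChain_iff_forall_rel_of_append_cons_cons.mpr fun _ _ _ _ hl =>
    ⟨isChain_iff_forall_rel_of_append_cons_cons.mp hr hl,
      isChain_iff_forall_rel_of_append_cons_cons.mp hs hl⟩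

theorem Relation.ReflTransGen.exists_of_simulation {α : Type*} {r S : α → α → Prop}
    (hS : ∀ ⦃a b a'⦄, r a b → S a a' → ∃ b', S b b' ∧ r a' b') {a b a' : α}
    (hab : ReflTransGen r a b) (ha : S a a') : ∃ b', S b b' ∧ ReflTransGen r a' b' := by
  induction hab with
  | refl => exact ⟨a', ha, .refl⟩
  | tail _ hxb ih =>
    obtain ⟨x', hx, hax'⟩ := ih
    obtain ⟨b', hb, hx'b'⟩ := hS hxb hx
    exact ⟨b', hb, hax'.tail hx'b'⟩

theorem Relation.ReflTransGen.of_some {α : Type*} {r : Option α → Option α → Prop}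
    (hr : ∀ y, ¬ r none y) {a b : α} (hab : ReflTransGen r (some a) (some b)) :
    ReflTransGen (fun x y => r (some x) (some y)) a b := by
  suffices ∀ z, ReflTransGen r (some a) z → ∀ b, z = some b →
      ReflTransGen (fun x y => r (some x) (some y)) a b from this _ hab b rfl
  intro z haz
  induction haz with
  | refl => rintro b ⟨⟩; exact .refl
  | @tail x _ _ hxz ih =>
    rintro b rfl
    cases x with
    | none => exact absurd hxz (hr _)
    | some x => exact (ih x rfl).tail hxz

theorem Nat.div_add_one_of_add_one_eq_mul {n m M : ℕ} (hn : n + 1 = M * m) : n / m + 1 = M := by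
  obtain _ | M := M
  · simp at hn
  · rcases Nat.eq_zero_or_pos m with rfl | hm
    · simp at hn
    rw [add_one_mul] at hn
    rw [Nat.div_eq_of_lt_le (k := M) (by omega) (by rw [add_one_mul]; omega)]

theorem Nat.mod_eq_sub_one_of_add_one_eq_mul {n m M : ℕ} (hn : n + 1 = M * m) :
    n % m = m - 1 := by
  have hdiv := Nat.div_add_one_of_add_one_eq_mul hn
  have := Nat.div_add_mod n m
  rw [← hdiv, add_one_mul] at hn
  rw [mul_comm] at this
  omega

section Inorder

variable {d h : ℕ}

theorem TreeNode.ext' {a b : TreeNode d h} (hdepth : (a.1 : ℕ) = b.1)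
    (hindex : (a.2 : ℕ) = b.2) : a = b :=
  Sigma.ext (Fin.ext hdepth) ((Fin.heq_ext_iff (congrArg (d ^ ·) hdepth)).mpr hindex)

theorem inorderLt_of_index_lt (hd : 0 < d) {a b : TreeNode d h} (hdepth : (a.1 : ℕ) = b.1)
    (hindex : (a.2 : ℕ) < b.2) : inorderLt d h a b := by
  unfold inorderLt
  conv_rhs => rw [hdepth]
  have := Nat.mul_lt_mul_of_pos_right hindex hd
  exact Nat.mul_lt_mul_of_pos_right (by omega) (by positivity)

theorem inorderLt_of_first_subtree (hd : 2 ≤ d) {a b : TreeNode d h} {k : ℕ}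
    (hdepth : (a.1 : ℕ) = b.1 + k + 1) (hindex : (a.2 : ℕ) / d ^ k = b.2 * d) :
    inorderLt d h a b := by
  set X := (b.2 : ℕ) * d + 1
  have ha : (a.2 : ℕ) + 1 ≤ X * d ^ k := Nat.div_lt_iff_lt_mul (by positivity) |>.mp (by omega)
  have hX : (a.2 : ℕ) * d + 1 < X * d ^ (k + 1) := by
    have := Nat.mul_le_mul_right d ha
    rw [add_one_mul, mul_assoc, ← pow_succ] at this
    omega
  calc ((a.2 : ℕ) * d + 1) * d ^ (b.1 : ℕ) < X * d ^ (k + 1) * d ^ (b.1 : ℕ) :=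
        Nat.mul_lt_mul_of_pos_right hX (by positivity)
    _ = X * d ^ (a.1 : ℕ) := by rw [hdepth]; ring

theorem inorderLt_of_later_subtree (hd : 0 < d) {a b : TreeNode d h} {k r : ℕ} (hr : 0 < r)
    (hdepth : (a.1 : ℕ) = b.1 + k + 1) (hindex : (a.2 : ℕ) / d ^ k = b.2 * d + r) :
    inorderLt d h b a := by
  set X := (b.2 : ℕ) * d + 1
  have ha : X * d ^ k ≤ a.2 :=
    calc X * d ^ k ≤ (b.2 * d + r) * d ^ k := Nat.mul_le_mul_right _ (by omega)
      _ ≤ a.2 := hindex ▸ Nat.div_mul_le_self _ _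
  have hX : X * d ^ (k + 1) < (a.2 : ℕ) * d + 1 := by
    have := Nat.mul_le_mul_right d ha
    rw [mul_assoc, ← pow_succ] at this
    omega
  calc X * d ^ (a.1 : ℕ) = X * d ^ (k + 1) * d ^ (b.1 : ℕ) := by rw [hdepth]; ring
    _ < ((a.2 : ℕ) * d + 1) * d ^ (b.1 : ℕ) := Nat.mul_lt_mul_of_pos_right hX (by positivity)

end Inorder

namespace CopyNode

variable {d h c : ℕ}

abbrev depth (a : CopyNode d h c) : ℕ := a.1.1

abbrev index (a : CopyNode d h c) : ℕ := a.1.2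

abbrev copy (a : CopyNode d h c) : ℕ := a.2

abbrev child (a b : CopyNode d h c) : Prop := gChild' d h c (some a) (some b)

theorem child_iff {a b : CopyNode d h c} : child a b ↔ a.depth = b.depth + 1 ∧
    a.index / d = b.index ∧ b.copy ≤ a.index % d * c + a.copy ∧
    a.index % d * c + a.copy ≤ (d - 1) * c + b.copy :=
  Iff.rfl

theorem not_copyLt_of_inorderLt {a b : CopyNode d h c} (hba : inorderLt d h b.1 a.1) :
    ¬ copyLt d h c a b := by
  rintro (hab | ⟨hab, -⟩)
  · exact lt_asymm hab hba
  · exact lt_irrefl _ (hab ▸ hba :)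

theorem not_copyLt_of_tree_eq {a b : CopyNode d h c} (hab : a.1 = b.1) (hcopy : b.copy ≤ a.copy) :
    ¬ copyLt d h c a b := by
  rintro (hlt | ⟨-, hlt⟩)
  · exact lt_irrefl _ (hab ▸ hlt :)
  · exact absurd hlt (not_lt.mpr hcopy)

theorem exists_index_div_of_reflTransGen {a b : CopyNode d h c} (hab : ReflTransGen child a b) :
    ∃ k, a.depth = b.depth + k ∧ a.index / d ^ k = b.index := by
  induction hab with
  | refl => exact ⟨0, rfl, by simp⟩
  | tail _ hxb ih =>
    obtain ⟨k, hk, hki⟩ := ih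
    obtain ⟨hxd, hxi, -, -⟩ := child_iff.mp hxb
    exact ⟨k + 1, by omega, by rw [pow_succ, ← Nat.div_div_eq_div_mul, hki, hxi]⟩

theorem exists_mid_of_reflTransGen {a b : CopyNode d h c} (hab : ReflTransGen child a b) {l : ℕ}
    (hb : b.depth ≤ l) (ha : l ≤ a.depth) :
    ∃ w, ReflTransGen child a w ∧ ReflTransGen child w b ∧ w.depth = l := by
  induction hab using ReflTransGen.head_induction_on with
  | refl => exact ⟨b, .refl, .refl, by omega⟩
  | @head a p hap hpb ih =>
    rcases ha.eq_or_lt with hl | hl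
    · exact ⟨a, .refl, .head hap hpb, hl.symm⟩
    · obtain ⟨w, hpw, hwb, hw⟩ := ih (by have := (child_iff.mp hap).1; omega)
      exact ⟨w, .head hap hpw, hwb, hw⟩

theorem copy_le_of_reflTransGen_left (hd : 0 < d) {a b : CopyNode d h c}
    (hab : ReflTransGen child a b) {k : ℕ} (hk : a.depth = b.depth + k)
    (hindex : a.index = b.index * d ^ k) : b.copy ≤ a.copy := by
  induction hab using ReflTransGen.head_induction_on generalizing k with
  | refl => exact le_rfl
  | @head a p hap hpb ih =>
    obtain ⟨hpd, hpi, hc1, -⟩ := child_iff.mp hap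
    obtain ⟨k', hk', -⟩ := exists_index_div_of_reflTransGen hpb
    obtain rfl : k = k' + 1 := by omega
    rw [pow_succ, ← mul_assoc] at hindex
    have := ih hk' (by rw [← hpi, hindex, Nat.mul_div_cancel _ hd])
    rw [hindex, Nat.mul_mod_left] at hc1
    omega

theorem copy_le_of_reflTransGen_right {a b : CopyNode d h c}
    (hab : ReflTransGen child a b) {k : ℕ} (hk : a.depth = b.depth + k)
    (hindex : a.index + 1 = (b.index + 1) * d ^ k) : a.copy ≤ b.copy := by
  induction hab using ReflTransGen.head_induction_on generalizing k with
  | refl => exact le_rfl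
  | @head a p hap hpb ih =>
    obtain ⟨hpd, hpi, -, hc2⟩ := child_iff.mp hap
    obtain ⟨k', hk', -⟩ := exists_index_div_of_reflTransGen hpb
    obtain rfl : k = k' + 1 := by omega
    rw [pow_succ, ← mul_assoc] at hindex
    have := ih hk' (by rw [← hpi, Nat.div_add_one_of_add_one_eq_mul hindex])
    rw [Nat.mod_eq_sub_one_of_add_one_eq_mul hindex] at hc2
    omega

theorem exists_child_of_copy_le (hd : 0 < d) ⦃a b a' : CopyNode d h c⦄ (hab : child a b)
    (ha : a'.1 = a.1 ∧ a.copy ≤ a'.copy) :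
    ∃ b' : CopyNode d h c, (b'.1 = b.1 ∧ b.copy ≤ b'.copy) ∧ child a' b' := by
  obtain ⟨t', i'⟩ := a'
  obtain ⟨rfl : t' = a.1, hi⟩ := ha
  obtain ⟨hdepth, hindex, hc1, hc2⟩ := hab
  have hr : a.index % d * c ≤ (d - 1) * c :=
    Nat.mul_le_mul_right c (Nat.le_sub_one_of_lt (Nat.mod_lt _ hd))
  have := i'.isLt
  -- the largest copy of `b` that still has `(a.1, i')` as a child
  refine ⟨(b.1, ⟨min (c - 1) (a.index % d * c + i'), by omega⟩), ⟨rfl, ?_⟩,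
    hdepth, hindex, ?_, ?_⟩ <;> simp only [index, copy] at * <;> omega

theorem exists_child_of_copy_ge (hd : 0 < d) ⦃a b a' : CopyNode d h c⦄ (hab : child a b)
    (ha : a'.1 = a.1 ∧ a'.copy ≤ a.copy) :
    ∃ b' : CopyNode d h c, (b'.1 = b.1 ∧ b'.copy ≤ b.copy) ∧ child a' b' := by
  obtain ⟨t', i'⟩ := a'
  obtain ⟨rfl : t' = a.1, hi⟩ := ha
  obtain ⟨hdepth, hindex, hc1, hc2⟩ := hab
  have hr : a.index % d * c ≤ (d - 1) * c :=
    Nat.mul_le_mul_right c (Nat.le_sub_one_of_lt (Nat.mod_lt _ hd))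
  have := i'.isLt
  -- the smallest copy of `b` that still has `(a.1, i')` as a child
  refine ⟨(b.1, ⟨a.index % d * c + i' - (d - 1) * c, by omega⟩), ⟨rfl, ?_⟩,
    hdepth, hindex, ?_, ?_⟩ <;> simp only [index, copy] at * <;> omega

theorem transGen_of_first_subtree (hd : 2 ≤ d) {w w' b : CopyNode d h c} {k : ℕ}
    (hwb : TransGen child w b) (hk : w.depth = b.depth + k + 1)
    (hfirst : w.index / d ^ k % d = 0) (htree : w'.1 = w.1) (hcopy : w.copy ≤ w'.copy) :
    TransGen child w' b := by
  obtain ⟨q, hwq, hqb⟩ := TransGen.tail'_iff.mp hwb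
  obtain ⟨k', hk', hq⟩ := exists_index_div_of_reflTransGen hwq
  obtain ⟨hqd, hqi, hc1, -⟩ := child_iff.mp hqb
  obtain rfl : k' = k := by omega
  obtain ⟨⟨t, i⟩, ⟨rfl : t = q.1, hi : q.copy ≤ i⟩, hwq'⟩ :=
    hwq.exists_of_simulation (exists_child_of_copy_le (by omega)) ⟨htree, hcopy⟩
  rw [hq] at hfirst
  have : c ≤ (d - 1) * c := Nat.le_mul_of_pos_left c (by omega)
  have := i.isLt
  -- a first-child edge into `b` only bounds the copy index of the child from below
  refine TransGen.tail' hwq' (child_iff.mpr ⟨hqd, hqi, ?_, ?_⟩)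
  · show b.copy ≤ q.index % d * c + i
    rw [hfirst] at hc1 ⊢
    omega
  · show q.index % d * c + i ≤ (d - 1) * c + b.copy
    rw [hfirst]
    omega

theorem transGen_of_later_subtree (hd : 0 < d) {w w' b : CopyNode d h c} {k : ℕ}
    (hwb : TransGen child w b) (hk : w.depth = b.depth + k + 1)
    (hlater : w.index / d ^ k % d ≠ 0) (htree : w'.1 = w.1) (hcopy : w'.copy ≤ w.copy) :
    TransGen child w' b := by
  obtain ⟨q, hwq, hqb⟩ := TransGen.tail'_iff.mp hwb
  obtain ⟨k', hk', hq⟩ := exists_index_div_of_reflTransGen hwq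
  obtain ⟨hqd, hqi, -, hc2⟩ := child_iff.mp hqb
  obtain rfl : k' = k := by omega
  obtain ⟨⟨t, i⟩, ⟨rfl : t = q.1, hi : (i : ℕ) ≤ q.copy⟩, hwq'⟩ :=
    hwq.exists_of_simulation (exists_child_of_copy_ge hd) ⟨htree, hcopy⟩
  rw [hq] at hlater
  have : c ≤ q.index % d * c := Nat.le_mul_of_pos_left c (Nat.pos_of_ne_zero hlater)
  have : b.copy < c := b.2.isLt
  -- an edge into `b` from a later child only bounds the copy index of the child from above
  refine TransGen.tail' hwq' (child_iff.mpr ⟨hqd, hqi, ?_, ?_⟩)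
  · show b.copy ≤ q.index % d * c + i
    omega
  · show q.index % d * c + i ≤ (d - 1) * c + b.copy
    omega

theorem eq_first_child_of_minimal (hd : 0 < d) {u : CopyNode d h c} {w : GNode d h c}
    (hw : gChild' d h c w (some u))
    (hmin : ∀ w', gChild' d h c w' (some u) → ¬ gLt d h c w' w) :
    ∃ y : CopyNode d h c, w = some y ∧
      y.depth = u.depth + 1 ∧ y.index = u.index * d ∧ y.copy = u.copy := by
  obtain _ | y := w
  · exact hw.elim
  obtain ⟨hyd, hyi, hc1, -⟩ := child_iff.mp hw
  let y₀ : CopyNode d h c := (⟨⟨u.depth + 1, hyd ▸ y.1.1.isLt⟩, ⟨u.index * d, by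
    rw [pow_succ]; exact Nat.mul_lt_mul_of_pos_right u.1.2.isLt hd⟩⟩, u.2)
  have hy₀ : child y₀ u := child_iff.mpr ⟨rfl, Nat.mul_div_cancel _ hd,
    show u.copy ≤ u.index * d % d * c + u.copy by simp,
    show u.index * d % d * c + u.copy ≤ (d - 1) * c + u.copy by simp⟩
  have hdiv := Nat.div_add_mod y.index d
  rw [hyi, mul_comm] at hdiv
  have hyi' : y.index = u.index * d := by
    by_contra hne
    exact hmin (some y₀) hy₀
      (Or.inl (inorderLt_of_index_lt hd hyd.symm (show u.index * d < y.index by omega)))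
  rw [hyi', Nat.mul_mod_left, zero_mul, zero_add] at hc1
  refine ⟨y, rfl, hyd, hyi', le_antisymm (not_lt.mp fun hlt => ?_) hc1⟩
  exact hmin (some y₀) hy₀ (Or.inr ⟨TreeNode.ext' hyd.symm hyi'.symm, hlt⟩)

theorem eq_last_child_of_maximal (hd : 0 < d) {u : CopyNode d h c} {w : GNode d h c}
    (hw : gChild' d h c w (some u))
    (hmax : ∀ w', gChild' d h c w' (some u) → ¬ gLt d h c w w') :
    ∃ y : CopyNode d h c, w = some y ∧
      y.depth = u.depth + 1 ∧ y.index + 1 = (u.index + 1) * d ∧ y.copy = u.copy := by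
  obtain _ | y := w
  · exact hw.elim
  obtain ⟨hyd, hyi, -, hc2⟩ := child_iff.mp hw
  have hmod : (u.index * d + (d - 1)) % d = d - 1 := by
    rw [Nat.mul_comm, Nat.mul_add_mod, Nat.mod_eq_of_lt (by omega)]
  let y₀ : CopyNode d h c := (⟨⟨u.depth + 1, hyd ▸ y.1.1.isLt⟩, ⟨u.index * d + (d - 1), by
    have : (u.index + 1) * d ≤ d ^ u.depth * d := Nat.mul_le_mul_right d u.1.2.isLt
    rw [pow_succ]; rw [add_one_mul] at this; omega⟩⟩, u.2)
  have hy₀ : child y₀ u := child_iff.mpr ⟨rfl, by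
    show (u.index * d + (d - 1)) / d = u.index
    rw [Nat.mul_comm, Nat.mul_add_div hd, Nat.div_eq_of_lt (by omega), add_zero],
    show u.copy ≤ (u.index * d + (d - 1)) % d * c + u.copy by omega,
    show (u.index * d + (d - 1)) % d * c + u.copy ≤ (d - 1) * c + u.copy by rw [hmod]⟩
  have hdiv := Nat.div_add_mod y.index d
  rw [hyi, mul_comm] at hdiv
  have := Nat.mod_lt y.index hd
  have hyi' : y.index = u.index * d + (d - 1) := by
    by_contra hne
    exact hmax (some y₀) hy₀
      (Or.inl (inorderLt_of_index_lt hd hyd (show y.index < u.index * d + (d - 1) by omega)))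
  rw [hyi', hmod] at hc2
  refine ⟨y, rfl, hyd, by rw [hyi', add_one_mul]; omega,
    le_antisymm (Nat.le_of_add_le_add_left hc2) (not_lt.mp fun hlt => ?_)⟩
  exact hmax (some y₀) hy₀ (Or.inr ⟨TreeNode.ext' hyd hyi', hlt⟩)

def IsOnLeftBranch (u y : CopyNode d h c) : Prop :=
  ∃ t, y.depth = u.depth + t ∧ y.index = u.index * d ^ t ∧ y.copy = u.copy

def IsOnRightBranch (v y : CopyNode d h c) : Prop :=
  ∃ t, y.depth = v.depth + t ∧ y.index + 1 = (v.index + 1) * d ^ t ∧ y.copy = v.copy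

theorem not_reflTransGen_of_isOnLeftBranch_of_depth_le (hd : 2 ≤ d) {u v y : CopyNode d h c}
    (hlt : copyLt d h c u v) (hy : IsOnLeftBranch u y) (hle : u.depth ≤ v.depth) :
    ¬ ReflTransGen child y v := by
  obtain ⟨t, hyd, hyi, hyc⟩ := hy
  intro hyv
  obtain ⟨k, hk, hkv⟩ := exists_index_div_of_reflTransGen hyv
  obtain ⟨s, hs⟩ := Nat.exists_eq_add_of_le hle
  obtain rfl : t = s + k := by omega
  have hvi : v.index = u.index * d ^ s := by
    rw [← hkv, hyi, pow_add, ← mul_assoc, Nat.mul_div_cancel _ (by positivity)]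
  have hvc : v.copy ≤ u.copy := by
    have := copy_le_of_reflTransGen_left (by omega) hyv hk (by rw [hyi, hvi, pow_add, mul_assoc])
    omega
  rcases s with _ | s
  · exact not_copyLt_of_tree_eq
      (TreeNode.ext' (show u.depth = v.depth by omega) (by simpa using hvi.symm)) hvc hlt
  · refine not_copyLt_of_inorderLt
      (inorderLt_of_first_subtree hd (show v.depth = u.depth + s + 1 by omega) ?_) hlt
    show v.index / d ^ s = u.index * d
    rw [hvi, pow_succ', ← mul_assoc, Nat.mul_div_cancel _ (by positivity)]

theorem transGen_of_isOnLeftBranch (hd : 2 ≤ d) {u v y : CopyNode d h c}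
    (hlt : copyLt d h c u v) (hy : IsOnLeftBranch u y) (hgt : v.depth < u.depth)
    (hyv : ReflTransGen child y v) : TransGen child u v := by
  obtain ⟨t, hyd, hyi, hyc⟩ := hy
  obtain ⟨w, hyw, hwv, hw⟩ := exists_mid_of_reflTransGen hyv (l := u.depth) hgt.le (by omega)
  obtain ⟨k, hk, hkw⟩ := exists_index_div_of_reflTransGen hyw
  obtain rfl : k = t := by omega
  have hwi : w.index = u.index := by
    rw [← hkw, hyi, Nat.mul_div_cancel _ (by positivity)]
  have hwc : w.copy ≤ u.copy := by
    have := copy_le_of_reflTransGen_left (by omega) hyw hk (by rw [hyi, hwi])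
    omega
  obtain ⟨m, hm, hmv⟩ := exists_index_div_of_reflTransGen hwv
  obtain ⟨m, rfl⟩ : ∃ m', m = m' + 1 := ⟨m - 1, by omega⟩
  have hfirst : u.index / d ^ m % d = 0 := by
    by_contra hr
    refine not_copyLt_of_inorderLt (inorderLt_of_later_subtree (by omega)
      (Nat.pos_of_ne_zero hr) (show u.depth = v.depth + m + 1 by omega) ?_) hlt
    show u.index / d ^ m = v.index * d + u.index / d ^ m % d
    rw [← hmv, hwi, pow_succ, ← Nat.div_div_eq_div_mul]
    exact (Nat.div_add_mod' _ _).symm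
  have hwv' : TransGen child w v :=
    (reflTransGen_iff_eq_or_transGen.mp hwv).resolve_left (by rintro rfl; omega)
  exact transGen_of_first_subtree hd hwv' (k := m) (by omega) (by rwa [hwi])
    (TreeNode.ext' hw.symm hwi.symm) hwc

theorem not_reflTransGen_of_isOnLeftBranch (hd : 2 ≤ d) {u v y : CopyNode d h c}
    (hlt : copyLt d h c u v) (huv : ¬ TransGen child u v) (hy : IsOnLeftBranch u y) :
    ¬ ReflTransGen child y v := fun hyv =>
  (le_or_gt u.depth v.depth).elim
    (fun hle => not_reflTransGen_of_isOnLeftBranch_of_depth_le hd hlt hy hle hyv)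
    (fun hgt => huv (transGen_of_isOnLeftBranch hd hlt hy hgt hyv))

theorem not_reflTransGen_of_isOnRightBranch_of_depth_le (hd : 2 ≤ d) {u v y : CopyNode d h c}
    (hlt : copyLt d h c u v) (hy : IsOnRightBranch v y) (hle : v.depth ≤ u.depth) :
    ¬ ReflTransGen child y u := by
  obtain ⟨t, hyd, hyi, hyc⟩ := hy
  intro hyu
  obtain ⟨k, hk, hku⟩ := exists_index_div_of_reflTransGen hyu
  obtain ⟨s, hs⟩ := Nat.exists_eq_add_of_le hle
  obtain rfl : t = s + k := by omega
  have hui : u.index + 1 = (v.index + 1) * d ^ s := by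
    rw [← hku]
    exact Nat.div_add_one_of_add_one_eq_mul (by rw [hyi, pow_add, mul_assoc])
  have hvc : v.copy ≤ u.copy := by
    have := copy_le_of_reflTransGen_right hyu hk (by rw [hyi, hui, pow_add, mul_assoc])
    omega
  rcases s with _ | s
  · exact not_copyLt_of_tree_eq
      (TreeNode.ext' (show u.depth = v.depth by omega) (by simpa using hui)) hvc hlt
  · refine not_copyLt_of_inorderLt (inorderLt_of_later_subtree (r := d - 1) (by omega)
      (by omega) (show u.depth = v.depth + s + 1 by omega) ?_) hlt
    show u.index / d ^ s = v.index * d + (d - 1)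
    have := Nat.div_add_one_of_add_one_eq_mul (m := d ^ s) (M := (v.index + 1) * d)
      (by rw [hui, pow_succ']; ring)
    rw [add_one_mul] at this
    omega

theorem transGen_of_isOnRightBranch (hd : 2 ≤ d) {u v y : CopyNode d h c}
    (hlt : copyLt d h c u v) (hy : IsOnRightBranch v y) (hgt : u.depth < v.depth)
    (hyu : ReflTransGen child y u) : TransGen child v u := by
  obtain ⟨t, hyd, hyi, hyc⟩ := hy
  obtain ⟨w, hyw, hwu, hw⟩ := exists_mid_of_reflTransGen hyu (l := v.depth) hgt.le (by omega)
  obtain ⟨k, hk, hkw⟩ := exists_index_div_of_reflTransGen hyw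
  obtain rfl : k = t := by omega
  have hwi : w.index = v.index := by
    have := Nat.div_add_one_of_add_one_eq_mul hyi
    omega
  have hwc : v.copy ≤ w.copy := by
    have := copy_le_of_reflTransGen_right hyw hk (by rw [hyi, hwi])
    omega
  obtain ⟨m, hm, hmu⟩ := exists_index_div_of_reflTransGen hwu
  obtain ⟨m, rfl⟩ : ∃ m', m = m' + 1 := ⟨m - 1, by omega⟩
  have hlater : v.index / d ^ m % d ≠ 0 := by
    intro hr
    refine not_copyLt_of_inorderLt (inorderLt_of_first_subtree hd
      (show v.depth = u.depth + m + 1 by omega) ?_) hlt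
    show v.index / d ^ m = u.index * d
    have := Nat.div_add_mod' (v.index / d ^ m) d
    rw [← hmu, hwi, pow_succ, ← Nat.div_div_eq_div_mul]
    omega
  have hwu' : TransGen child w u :=
    (reflTransGen_iff_eq_or_transGen.mp hwu).resolve_left (by rintro rfl; omega)
  exact transGen_of_later_subtree (by omega) hwu' (k := m) (by omega) (by rwa [hwi])
    (TreeNode.ext' hw.symm hwi.symm) hwc

theorem not_reflTransGen_of_isOnRightBranch (hd : 2 ≤ d) {u v y : CopyNode d h c}
    (hlt : copyLt d h c u v) (hvu : ¬ TransGen child v u) (hy : IsOnRightBranch v y) :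
    ¬ ReflTransGen child y u := fun hyu =>
  (le_or_gt v.depth u.depth).elim
    (fun hle => not_reflTransGen_of_isOnRightBranch_of_depth_le hd hlt hy hle hyu)
    (fun hgt => hvu (transGen_of_isOnRightBranch hd hlt hy hgt hyu))

end CopyNode

open CopyNode

theorem IsPathFromLeafTo.reflTransGen_of_mem {V : Type} {child : V → V → Prop} {Q : List V}
    {v x : V} (hQ : IsPathFromLeafTo child Q v) (hx : x ∈ Q) : ReflTransGen child x v :=
  List.IsChain.backwards_induction (ReflTransGen child · v) Q hQ.2.2.2
    (fun _ _ hxy hy => hy.head hxy)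
    (fun hne => by rw [Option.some.inj ((List.getLast?_eq_some_getLast hne).symm.trans hQ.2.1)])
    x hx

theorem IsLeftmostPathTo.exists_isOnLeftBranch {d h c : ℕ} (hd : 0 < d)
    {P : List (GNode d h c)} {u : CopyNode d h c}
    (hP : IsLeftmostPathTo (gLt d h c) (gChild' d h c) P (some u)) {x : GNode d h c}
    (hx : x ∈ P) : ∃ y, x = some y ∧ IsOnLeftBranch u y := by
  obtain ⟨⟨-, hlast, -, hchild⟩, hmin⟩ := hP
  refine List.IsChain.backwards_induction (fun x => ∃ y, x = some y ∧ IsOnLeftBranch u y) P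
    (hchild.and hmin) ?_ ?_ x hx
  · rintro a _ ⟨hab, habmin⟩ ⟨y, rfl, t, hyd, hyi, hyc⟩
    obtain ⟨y', rfl, hd', hi', hc'⟩ := eq_first_child_of_minimal hd hab habmin
    exact ⟨y', rfl, t + 1, by omega, by rw [hi', hyi, pow_succ, mul_assoc], by omega⟩
  · intro hne
    rw [Option.some.inj ((List.getLast?_eq_some_getLast hne).symm.trans hlast)]
    exact ⟨u, rfl, 0, rfl, by simp, rfl⟩

theorem IsRightmostPathTo.exists_isOnRightBranch {d h c : ℕ} (hd : 0 < d)
    {P : List (GNode d h c)} {v : CopyNode d h c}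
    (hP : IsRightmostPathTo (gLt d h c) (gChild' d h c) P (some v)) {x : GNode d h c}
    (hx : x ∈ P) : ∃ y, x = some y ∧ IsOnRightBranch v y := by
  obtain ⟨⟨-, hlast, -, hchild⟩, hmax⟩ := hP
  refine List.IsChain.backwards_induction (fun x => ∃ y, x = some y ∧ IsOnRightBranch v y) P
    (hchild.and hmax) ?_ ?_ x hx
  · rintro a _ ⟨hab, habmax⟩ ⟨y, rfl, t, hyd, hyi, hyc⟩
    obtain ⟨y', rfl, hd', hi', hc'⟩ := eq_last_child_of_maximal hd hab habmax
    exact ⟨y', rfl, t + 1, by omega, by rw [hi', hyi, pow_succ, mul_assoc], by omega⟩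
  · intro hne
    rw [Option.some.inj ((List.getLast?_eq_some_getLast hne).symm.trans hlast)]
    exact ⟨v, rfl, 0, rfl, by simp, rfl⟩

theorem stmt_16_general (d h c : ℕ) (hd : 2 ≤ d)
    (u v : CopyNode d h c) (hlt : copyLt d h c u v)
    (huv : ¬ Relation.TransGen (gChild' d h c) (some u) (some v))
    (hvu : ¬ Relation.TransGen (gChild' d h c) (some v) (some u)) :
    (∀ P Q : List (GNode d h c),
      IsLeftmostPathTo (gLt d h c) (gChild' d h c) P (some u) →
      IsPathFromLeafTo (gChild' d h c) Q (some v) →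
      ∀ x, x ∈ P → x ∉ Q) ∧
    (∀ P Q : List (GNode d h c),
      IsRightmostPathTo (gLt d h c) (gChild' d h c) P (some v) →
      IsPathFromLeafTo (gChild' d h c) Q (some u) →
      ∀ x, x ∈ P → x ∉ Q) := by
  have hroot : ∀ y, ¬ gChild' d h c none y := fun _ => id
  have hlift {a b : CopyNode d h c} (hab : TransGen child a b) :
      TransGen (gChild' d h c) (some a) (some b) :=
    TransGen.lift some (fun _ _ => id) _ _ hab
  refine ⟨fun P Q hP hQ x hxP hxQ => ?_, fun P Q hP hQ x hxP hxQ => ?_⟩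
  · obtain ⟨y, rfl, hy⟩ := hP.exists_isOnLeftBranch (by omega) hxP
    exact not_reflTransGen_of_isOnLeftBranch hd hlt (huv ∘ hlift) hy
      ((hQ.reflTransGen_of_mem hxQ).of_some hroot)
  · obtain ⟨y, rfl, hy⟩ := hP.exists_isOnRightBranch (by omega) hxP
    exact not_reflTransGen_of_isOnRightBranch hd hlt (hvu ∘ hlift) hy
      ((hQ.reflTransGen_of_mem hxQ).of_some hroot)

/-- Let `d ≥ 2`, `h ≥ 1`, `c ≥ 1`, and let `u < v` be copy nodes of
`G'_{d,h}` such that there is no directed path from `u` to `v` and none from `v` to `u`.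
Then the left-most path to `u` does not intersect any path from a leaf to `v`, and the
right-most path to `v` does not intersect any path from a leaf to `u`. -/
theorem stmt_16 (d h c : ℕ) (hd : 2 ≤ d) (hh : 1 ≤ h) (hc : 1 ≤ c)
    (u v : CopyNode d h c) (hlt : copyLt d h c u v)
    (huv : ¬ Relation.TransGen (gChild' d h c) (some u) (some v))
    (hvu : ¬ Relation.TransGen (gChild' d h c) (some v) (some u)) :
    (∀ P Q : List (GNode d h c),
      IsLeftmostPathTo (gLt d h c) (gChild' d h c) P (some u) →
      IsPathFromLeafTo (gChild' d h c) Q (some v) →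
      ∀ x, x ∈ P → x ∉ Q) ∧
    (∀ P Q : List (GNode d h c),
      IsRightmostPathTo (gLt d h c) (gChild' d h c) P (some v) →
      IsPathFromLeafTo (gChild' d h c) Q (some u) →
      ∀ x, x ∈ P → x ∉ Q) :=
  stmt_16_general d h c hd u v hlt huv hvu
end

section
/- Let h ≥ 2, k ≥ 2 and 1 ≤ π < k, and let B be a deterministic k-way branching program solving BT^h_2(k) such that |LeftThrifty(q)| ≤ π and |RightThrifty(q)| ≤ π for every state q of B labeled with an internal node variable. Then for every input I and every internal node i of T^h: the computation path of I visits at least one state labeled with the thrifty i variable of I, and for every such state q, for each child j of i there is a state occurring earlier than q on the computation path of I that is labeled with the thrifty j variable of I. -/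
/-! Framework: the tree evaluation problem and deterministic k-way branching programs.

The balanced binary tree of height `h` has nodes numbered heap-style `1, …, 2^h - 1`:
the root is node `1` and the children of node `i` are `2i` and `2i+1`.
Elements of `[k] = {1,…,k}` are represented by `Fin k` (the element `1 ∈ [k]`
corresponds to `(0 : Fin k)`). -/

/-- Node `i` is a leaf of the height-`h` balanced binary tree. -/
def IsLeafNode (h i : ℕ) : Prop := 2 ^ (h - 1) ≤ i ∧ i < 2 ^ h

/-- Node `i` is an internal node of the height-`h` balanced binary tree. -/
def IsInternalNode (h i : ℕ) : Prop := 1 ≤ i ∧ i < 2 ^ (h - 1)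

/-- An input to the height-`h` tree evaluation problem over `[k]`: a binary function on `[k]`
for each internal node and a value in `[k]` for each leaf (values at irrelevant indices
are ignored). -/
structure TEInput (h k : ℕ) where
  f : ℕ → Fin k → Fin k → Fin k
  leaf : ℕ → Fin k

/-- Auxiliary recursion (on fuel) computing node values. -/
def TEInput.valAux {h k : ℕ} (I : TEInput h k) : ℕ → ℕ → Fin k
  | 0, i => I.leaf i
  | m + 1, i =>
      if 2 ^ (h - 1) ≤ i then I.leaf i
      else I.f i (I.valAux m (2 * i)) (I.valAux m (2 * i + 1))

/-- The value `v_i^I` of node `i`: the leaf value if `i` is a leaf, and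
`f_i^I (v_{2i}^I, v_{2i+1}^I)` if `i` is an internal node. -/
def TEInput.val {h k : ℕ} (I : TEInput h k) (i : ℕ) : Fin k := I.valAux h i

/-- The input variables of the tree evaluation problem: one variable `f_i(a,b)` for each
internal node `i` and `a b ∈ [k]`, and one variable `l_i` for each leaf `i`. -/
inductive TEVar (h k : ℕ) where
  | internal (i : ℕ) (hi : IsInternalNode h i) (a b : Fin k) : TEVar h k
  | leaf (i : ℕ) (hi : IsLeafNode h i) : TEVar h k

/-- The value of a variable under an input. -/
def TEInput.evalVar {h k : ℕ} (I : TEInput h k) : TEVar h k → Fin k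
  | .internal i _ a b => I.f i a b
  | .leaf i _ => I.leaf i

/-- The node a variable belongs to. -/
def TEVar.node {h k : ℕ} : TEVar h k → ℕ
  | .internal i _ _ _ => i
  | .leaf i _ => i

/-- `X` is the thrifty `i` variable of input `I`: it is `f_i(v_{2i}^I, v_{2i+1}^I)`
if `i` is an internal node, and `l_i` if `i` is a leaf. -/
def IsThriftyVarOf {h k : ℕ} (I : TEInput h k) (i : ℕ) : TEVar h k → Prop
  | .internal j _ a b => j = i ∧ a = I.val (2 * j) ∧ b = I.val (2 * j + 1)
  | .leaf j _ => j = i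

/-- A deterministic `k`-way branching program with variables indexed by `V` and
output set `R`: a set of states (of cardinality `size`), a start state, each state
labeled either with a variable to query (non-output states, with `k` out-edges
labeled `1,…,k`) or with an output value (output sink states). -/
structure DetBP (V : Type) (k : ℕ) (R : Type) where
  size : ℕ
  start : Fin size
  label : Fin size → V ⊕ R
  next : Fin size → Fin k → Fin size

namespace DetBP

variable {V : Type} {k : ℕ} {R : Type}

/-- One step of computation on input `x`: from a state querying variable `v`, follow
the out-edge labeled `x v`; output states are sinks. -/
def step (B : DetBP V k R) (x : V → Fin k) (s : Fin B.size) : Fin B.size :=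
  match B.label s with
  | .inl v => B.next s (x v)
  | .inr _ => s

/-- The state of the computation path of `x` at time `t`. -/
def run (B : DetBP V k R) (x : V → Fin k) (t : ℕ) : Fin B.size :=
  (B.step x)^[t] B.start

/-- The depth of `B` is at most `D`: on every input, the computation path reaches an
output state within its first `D` states. -/
def DepthLE (B : DetBP V k R) (D : ℕ) : Prop :=
  ∀ x : V → Fin k, ∃ t < D, (B.label (B.run x t)).isRight = true

/-- `B` solves the function tree evaluation problem `FT^h_2(k)`: on every input `I`, the
computation path ends in the output state labeled with the root value `v_1^I`. -/
def SolvesFT {h : ℕ} (B : DetBP (TEVar h k) k (Fin k)) : Prop :=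
  ∀ I : TEInput h k, ∃ t, B.label (B.run I.evalVar t) = Sum.inr (I.val 1)

/-- `B` solves the decision tree evaluation problem `BT^h_2(k)`: on every input `I`, the
computation path ends in the output state labeled with whether `v_1^I = 1`
(the element `1 ∈ [k]` being `(0 : Fin k)`). -/
def SolvesBT {h : ℕ} (B : DetBP (TEVar h k) k Bool) : Prop :=
  ∀ I : TEInput h k, ∃ t, B.label (B.run I.evalVar t) = Sum.inr (decide ((I.val 1 : Fin k).val = 0))

/-- `B` is thrifty: on every input `I`, every query `f_i(a,b)` made along the computation
path of `I` satisfies `a = v_{2i}^I` and `b = v_{2i+1}^I`. -/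
def Thrifty {h : ℕ} (B : DetBP (TEVar h k) k R) : Prop :=
  ∀ (I : TEInput h k) (t i : ℕ) (hi : IsInternalNode h i) (a b : Fin k),
    B.label (B.run I.evalVar t) = Sum.inl (TEVar.internal i hi a b) →
    a = I.val (2 * i) ∧ b = I.val (2 * i + 1)

end DetBP

/-- For a state `q` of `B` labeled with a variable `f_i(a,b)`, `RightThrifty B q i b` is the
set of `a' ∈ [k]` such that some input `I` whose computation path visits `q` satisfies
`v_{2i}^I = a'` and `v_{2i+1}^I = b`. -/
def RightThrifty {h k : ℕ} (B : DetBP (TEVar h k) k Bool) (q : Fin B.size)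
    (i : ℕ) (b : Fin k) : Set (Fin k) :=
  {a' | ∃ I : TEInput h k, (∃ t : ℕ, B.run I.evalVar t = q) ∧
    I.val (2 * i) = a' ∧ I.val (2 * i + 1) = b}

/-- For a state `q` of `B` labeled with a variable `f_i(a,b)`, `LeftThrifty B q i a` is the
set of `b' ∈ [k]` such that some input `I` whose computation path visits `q` satisfies
`v_{2i}^I = a` and `v_{2i+1}^I = b'`. -/
def LeftThrifty {h k : ℕ} (B : DetBP (TEVar h k) k Bool) (q : Fin B.size)
    (i : ℕ) (a : Fin k) : Set (Fin k) :=
  {b' | ∃ I : TEInput h k, (∃ t : ℕ, B.run I.evalVar t = q) ∧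
    I.val (2 * i) = a ∧ I.val (2 * i + 1) = b'}

section Stmt19Aux

variable {h k : ℕ}

/-- `n` is a descendant-or-self of `j` in heap numbering. -/
def Desc (j n : ℕ) : Prop := ∃ d, j * 2 ^ d ≤ n ∧ n < (j + 1) * 2 ^ d

lemma Desc.self (j : ℕ) : Desc j j := ⟨0, by simp⟩

lemma Desc.of_left {j n : ℕ} : Desc (2 * j) n → Desc j n := by
  rintro ⟨d, h1, h2⟩
  exact ⟨d + 1, by rw [pow_succ]; nlinarith, by rw [pow_succ]; nlinarith⟩

lemma Desc.of_right {j n : ℕ} : Desc (2 * j + 1) n → Desc j n := by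
  rintro ⟨d, h1, h2⟩
  exact ⟨d + 1, by rw [pow_succ]; nlinarith, by rw [pow_succ]; nlinarith⟩

lemma Desc.le {j n : ℕ} (hd : Desc j n) : j ≤ n := by
  obtain ⟨d, h1, _⟩ := hd
  have : (1:ℕ) ≤ 2 ^ d := Nat.one_le_two_pow
  nlinarith

lemma not_desc_left_sib {i : ℕ} (hi : 1 ≤ i) : ¬ Desc (2 * i) (2 * i + 1) := by
  rintro ⟨d, h1, h2⟩
  match d with
  | 0 => simp at h2
  | e + 1 =>
    have h2e : (2:ℕ) ≤ 2 ^ (e+1) := by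
      have : (1:ℕ) ≤ 2 ^ e := Nat.one_le_two_pow
      rw [pow_succ]; omega
    nlinarith

/-- Modify input `I` at the thrifty variable of node `n`, giving node `n` the value `c`. -/
def TEInput.modify (I : TEInput h k) (n : ℕ) (c : Fin k) : TEInput h k :=
  if 2 ^ (h - 1) ≤ n then
    { f := I.f, leaf := Function.update I.leaf n c }
  else
    { f := fun j a b =>
        if j = n ∧ a = I.val (2 * n) ∧ b = I.val (2 * n + 1) then c else I.f j a b,
      leaf := I.leaf }

lemma valAux_congr (I I' : TEInput h k) :
    ∀ (m j : ℕ), (∀ n, Desc j n → I'.f n = I.f n) → (∀ n, Desc j n → I'.leaf n = I.leaf n) →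
      I'.valAux m j = I.valAux m j := by
  intro m
  induction m with
  | zero => intro j hf hl; exact hl j (Desc.self j)
  | succ m ih =>
    intro j hf hl
    show (if 2 ^ (h-1) ≤ j then I'.leaf j else I'.f j _ _)
        = (if 2 ^ (h-1) ≤ j then I.leaf j else I.f j _ _)
    by_cases hj : 2 ^ (h - 1) ≤ j
    · rw [if_pos hj, if_pos hj]; exact hl j (Desc.self j)
    · rw [if_neg hj, if_neg hj]
      rw [ih (2 * j) (fun n hn => hf n hn.of_left) (fun n hn => hl n hn.of_left),
        ih (2 * j + 1) (fun n hn => hf n hn.of_right) (fun n hn => hl n hn.of_right),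
        hf j (Desc.self j)]

lemma modify_valAux (I : TEInput h k) (n : ℕ) (c : Fin k) {j : ℕ} (hnd : ¬ Desc j n)
    (m : ℕ) : (I.modify n c).valAux m j = I.valAux m j := by
  apply valAux_congr
  · intro n' hn'
    have hne : n' ≠ n := fun e => hnd (e ▸ hn')
    unfold TEInput.modify
    split
    · rfl
    · dsimp only
      funext a b
      rw [if_neg (by rintro ⟨rfl, -, -⟩; exact hne rfl)]
  · intro n' hn'
    have hne : n' ≠ n := fun e => hnd (e ▸ hn')
    unfold TEInput.modify
    split
    · exact Function.update_of_ne hne _ _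
    · rfl

lemma modify_val_of_not_desc (I : TEInput h k) (n : ℕ) (c : Fin k) {j : ℕ}
    (hnd : ¬ Desc j n) : (I.modify n c).val j = I.val j :=
  modify_valAux I n c hnd h

lemma valAux_succ (I : TEInput h k) :
    ∀ (m j : ℕ), 2 ^ (h - 1) ≤ j * 2 ^ m → I.valAux (m + 1) j = I.valAux m j := by
  intro m
  induction m with
  | zero =>
    intro j hj
    simp only [pow_zero, mul_one] at hj
    show (if 2 ^ (h-1) ≤ j then I.leaf j else _) = I.leaf j
    rw [if_pos hj]
  | succ m ih =>
    intro j hj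
    show (if 2 ^ (h-1) ≤ j then I.leaf j else I.f j (I.valAux (m+1) (2*j)) (I.valAux (m+1) (2*j+1)))
        = (if 2 ^ (h-1) ≤ j then I.leaf j else I.f j (I.valAux m (2*j)) (I.valAux m (2*j+1)))
    by_cases h1 : 2 ^ (h - 1) ≤ j
    · rw [if_pos h1, if_pos h1]
    · rw [if_neg h1, if_neg h1]
      rw [ih (2 * j) (by rw [pow_succ] at hj; nlinarith),
        ih (2 * j + 1) (by rw [pow_succ] at hj; nlinarith)]

lemma val_eq_valAux_pred (I : TEInput h k) {j : ℕ} (hj : 1 ≤ j) (hh : 1 ≤ h) :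
    I.val j = I.valAux (h - 1) j := by
  obtain ⟨m, rfl⟩ : ∃ m, h = m + 1 := ⟨h - 1, by omega⟩
  have := valAux_succ I m j (by
    simp only [Nat.add_sub_cancel]
    nlinarith [Nat.one_le_two_pow (n := m)])
  show I.valAux (m + 1) j = I.valAux (m + 1 - 1) j
  simpa using this

lemma modify_val_self (I : TEInput h k) {n : ℕ} (c : Fin k) (hn : 1 ≤ n) (hh : 1 ≤ h) :
    (I.modify n c).val n = c := by
  obtain ⟨m, rfl⟩ : ∃ m, h = m + 1 := ⟨h - 1, by omega⟩
  show (I.modify n c).valAux (m + 1) n = c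
  show (if 2 ^ (m + 1 - 1) ≤ n then (I.modify n c).leaf n
      else (I.modify n c).f n ((I.modify n c).valAux m (2*n)) ((I.modify n c).valAux m (2*n+1))) = c
  by_cases h1 : 2 ^ (m + 1 - 1) ≤ n
  · rw [if_pos h1]
    unfold TEInput.modify
    rw [if_pos h1]
    exact Function.update_self _ _ _
  · rw [if_neg h1]
    have hL : (I.modify n c).valAux m (2 * n) = I.val (2 * n) := by
      rw [modify_valAux I n c (fun hd => by have := hd.le; omega) m]
      exact (val_eq_valAux_pred I (by omega) (by omega)).symm
    have hR : (I.modify n c).valAux m (2 * n + 1) = I.val (2 * n + 1) := by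
      rw [modify_valAux I n c (fun hd => by have := hd.le; omega) m]
      exact (val_eq_valAux_pred I (by omega) (by omega)).symm
    rw [hL, hR]
    show (I.modify n c).f n (I.val (2*n)) (I.val (2*n+1)) = c
    unfold TEInput.modify
    rw [if_neg h1]
    exact if_pos ⟨rfl, rfl, rfl⟩

lemma evalVar_modify (I : TEInput h k) (n : ℕ) (c : Fin k) (X : TEVar h k)
    (hX : ¬ IsThriftyVarOf I n X) : (I.modify n c).evalVar X = I.evalVar X := by
  cases X with
  | internal j hj a b =>
    show (I.modify n c).f j a b = I.f j a b
    unfold TEInput.modify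
    split
    · rfl
    · exact if_neg (fun ⟨e1, e2, e3⟩ => hX (by subst e1; exact ⟨rfl, e2, e3⟩))
  | leaf j hj =>
    show (I.modify n c).leaf j = I.leaf j
    unfold TEInput.modify
    split
    · exact Function.update_of_ne (fun e => hX e) _ _
    · rfl

lemma run_agree {V R : Type} (B : DetBP V k R) (x x' : V → Fin k) (t : ℕ)
    (hag : ∀ s < t, ∀ X, B.label (B.run x s) = Sum.inl X → x' X = x X) :
    ∀ s ≤ t, B.run x' s = B.run x s := by
  intro s
  induction s with
  | zero => intro _; rfl
  | succ s ih =>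
    intro hst
    have hs := ih (by omega)
    show (B.step x')^[s+1] B.start = (B.step x)^[s+1] B.start
    rw [Function.iterate_succ_apply', Function.iterate_succ_apply']
    show B.step x' (B.run x' s) = B.step x (B.run x s)
    rw [hs]
    rcases hl : B.label (B.run x s) with X | r
    · simp only [DetBP.step, hl, hag s (by omega) X hl]
    · simp only [DetBP.step, hl]

lemma run_out_stable {V R : Type} (B : DetBP V k R) (x : V → Fin k) {t : ℕ} {r : R}
    (hl : B.label (B.run x t) = Sum.inr r) : ∀ u, t ≤ u → B.run x u = B.run x t := by
  intro u hu
  induction u, hu using Nat.le_induction with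
  | base => rfl
  | succ u hu ih =>
    show (B.step x)^[u+1] B.start = _
    rw [Function.iterate_succ_apply']
    show B.step x (B.run x u) = _
    rw [ih]
    simp only [DetBP.step, hl]

lemma out_unique {V R : Type} (B : DetBP V k R) (x : V → Fin k) {t₁ t₂ : ℕ} {r₁ r₂ : R}
    (h1 : B.label (B.run x t₁) = Sum.inr r₁) (h2 : B.label (B.run x t₂) = Sum.inr r₂) :
    r₁ = r₂ := by
  rcases le_total t₁ t₂ with hle | hle
  · rw [run_out_stable B x h1 t₂ hle, h1] at h2
    exact Sum.inr.inj h2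
  · rw [run_out_stable B x h2 t₁ hle, h2] at h1
    exact (Sum.inr.inj h1).symm

end Stmt19Aux

section Stmt19Main

variable {h k π : ℕ}

/-- Part (2): any thrifty query at internal node `i` is preceded by thrifty queries at
both children. -/
lemma thrifty_children (hh : 2 ≤ h) (hπk : π < k)
    (B : DetBP (TEVar h k) k Bool)
    (hbound : ∀ (q : Fin B.size) (i : ℕ) (hi : IsInternalNode h i) (a b : Fin k),
      B.label q = Sum.inl (TEVar.internal i hi a b) →
      (LeftThrifty B q i a).ncard ≤ π ∧ (RightThrifty B q i b).ncard ≤ π)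
    (I : TEInput h k) (i : ℕ) (hi : IsInternalNode h i)
    (t : ℕ) (X : TEVar h k)
    (hlab : B.label (B.run I.evalVar t) = Sum.inl X) (hthr : IsThriftyVarOf I i X)
    (j : ℕ) (hj : j = 2 * i ∨ j = 2 * i + 1) :
    ∃ s < t, ∃ Y : TEVar h k,
      B.label (B.run I.evalVar s) = Sum.inl Y ∧ IsThriftyVarOf I j Y := by
  by_contra hcon
  push_neg at hcon
  -- X must be an internal-node variable at node i with thrifty coordinates
  obtain ⟨i', hi', a, b, rfl, e1, e2, e3⟩ :
      ∃ (i' : ℕ) (hi' : IsInternalNode h i') (a b : Fin k),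
        X = TEVar.internal i' hi' a b ∧ i' = i ∧ a = I.val (2 * i') ∧ b = I.val (2 * i' + 1) := by
    cases X with
    | internal i' hi' a b =>
      obtain ⟨e1, e2, e3⟩ := hthr
      exact ⟨i', hi', a, b, rfl, e1, e2, e3⟩
    | leaf j' hj' =>
      exfalso
      have : j' = i := hthr
      rcases hj' with ⟨hl, -⟩
      rcases hi with ⟨-, hu⟩
      omega
  have e1' : i = i' := e1.symm
  subst e1'
  subst e2; subst e3
  set q := B.run I.evalVar t with hq
  -- for any c, the input modified at the thrifty j variable still reaches q
  have key : ∀ c : Fin k, B.run (I.modify j c).evalVar t = q := by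
    intro c
    apply run_agree B I.evalVar (I.modify j c).evalVar t
      (fun s hs Y hY => evalVar_modify I j c Y (fun hthrY => hcon s hs Y hY hthrY)) t le_rfl
  have hj1 : 1 ≤ j := by rcases hi with ⟨h1, -⟩; omega
  have hvself : ∀ c : Fin k, (I.modify j c).val j = c :=
    fun c => modify_val_self I c hj1 (by omega)
  rcases hj with rfl | rfl
  · -- left child: RightThrifty is everything
    have hsub : (Set.univ : Set (Fin k)) ⊆ RightThrifty B q i (I.val (2 * i + 1)) := by
      intro c _
      refine ⟨I.modify (2 * i) c, ⟨t, key c⟩, hvself c, ?_⟩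
      exact modify_val_of_not_desc I (2 * i) c (fun hd => by have := hd.le; omega)
    have hcard : (RightThrifty B q i (I.val (2 * i + 1))).ncard = k := by
      rw [Set.eq_univ_of_univ_subset hsub, Set.ncard_univ, Nat.card_eq_fintype_card,
        Fintype.card_fin]
    have := (hbound q i hi' (I.val (2 * i)) (I.val (2 * i + 1)) hlab).2
    omega
  · -- right child: LeftThrifty is everything
    have hi1 : 1 ≤ i := hi.1
    have hsub : (Set.univ : Set (Fin k)) ⊆ LeftThrifty B q i (I.val (2 * i)) := by
      intro c _
      refine ⟨I.modify (2 * i + 1) c, ⟨t, key c⟩, ?_, hvself c⟩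
      exact modify_val_of_not_desc I (2 * i + 1) c (not_desc_left_sib hi1)
    have hcard : (LeftThrifty B q i (I.val (2 * i))).ncard = k := by
      rw [Set.eq_univ_of_univ_subset hsub, Set.ncard_univ, Nat.card_eq_fintype_card,
        Fintype.card_fin]
    have := (hbound q i hi' (I.val (2 * i)) (I.val (2 * i + 1)) hlab).1
    omega

/-- The computation path of any input visits a state labeled with the thrifty root
variable. -/
lemma thrifty_root (hh : 2 ≤ h) (hk : 2 ≤ k)
    (B : DetBP (TEVar h k) k Bool) (hB : B.SolvesBT) (I : TEInput h k) :
    ∃ (t : ℕ) (X : TEVar h k),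
      B.label (B.run I.evalVar t) = Sum.inl X ∧ IsThriftyVarOf I 1 X := by
  by_contra hcon
  push_neg at hcon
  set c : Fin k := if (I.val 1 : Fin k).val = 0 then ⟨1, by omega⟩ else ⟨0, by omega⟩ with hc
  set I' := I.modify 1 c with hI'
  have hrun : ∀ s, B.run I'.evalVar s = B.run I.evalVar s := by
    intro s
    exact run_agree B I.evalVar I'.evalVar s
      (fun u _ Y hY => evalVar_modify I 1 c Y (hcon u Y hY)) s le_rfl
  have hval : I'.val 1 = c := modify_val_self I c le_rfl (by omega)
  obtain ⟨t1, h1⟩ := hB I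
  obtain ⟨t2, h2⟩ := hB I'
  rw [hrun t2, hval] at h2
  have := out_unique B I.evalVar h1 h2
  rw [decide_eq_decide] at this
  by_cases hv : (I.val 1 : Fin k).val = 0
  · have hc1 : c = ⟨1, by omega⟩ := by rw [hc, if_pos hv]
    have h1v := this.mp hv
    rw [hc1] at h1v
    simp at h1v
  · have hc0 : c = ⟨0, by omega⟩ := by rw [hc, if_neg hv]
    have h0 : (c : Fin k).val = 0 := by rw [hc0]
    exact hv (this.mpr h0)

end Stmt19Main

/-- Let `h ≥ 2`, `k ≥ 2`, `1 ≤ π < k` and let `B` be a deterministic `k`-way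
branching program solving `BT^h_2(k)` with `|LeftThrifty(q)| ≤ π` and `|RightThrifty(q)| ≤ π`
for every state `q` labeled with an internal node variable. Then for every input `I` and
internal node `i`: the computation path of `I` visits at least one state labeled with the
thrifty `i` variable of `I`, and for every such state (visited at time `t`) and each child
`j` of `i` there is an earlier time `s < t` at which the path is at a state labeled with
the thrifty `j` variable of `I`. -/
theorem stmt_19 (h k π : ℕ) (hh : 2 ≤ h) (hk : 2 ≤ k) (hπ1 : 1 ≤ π) (hπk : π < k)
    (B : DetBP (TEVar h k) k Bool) (hB : B.SolvesBT)
    (hbound : ∀ (q : Fin B.size) (i : ℕ) (hi : IsInternalNode h i) (a b : Fin k),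
      B.label q = Sum.inl (TEVar.internal i hi a b) →
      (LeftThrifty B q i a).ncard ≤ π ∧ (RightThrifty B q i b).ncard ≤ π) :
    ∀ (I : TEInput h k) (i : ℕ), IsInternalNode h i →
      (∃ (t : ℕ) (X : TEVar h k),
        B.label (B.run I.evalVar t) = Sum.inl X ∧ IsThriftyVarOf I i X) ∧
      (∀ (t : ℕ) (X : TEVar h k),
        B.label (B.run I.evalVar t) = Sum.inl X → IsThriftyVarOf I i X →
        ∀ j : ℕ, j = 2 * i ∨ j = 2 * i + 1 →
          ∃ s < t, ∃ Y : TEVar h k,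
            B.label (B.run I.evalVar s) = Sum.inl Y ∧ IsThriftyVarOf I j Y) := by
  intro I
  have hex : ∀ i, IsInternalNode h i →
      ∃ (t : ℕ) (X : TEVar h k),
        B.label (B.run I.evalVar t) = Sum.inl X ∧ IsThriftyVarOf I i X := by
    intro i
    induction i using Nat.strong_induction_on with
    | _ i IH =>
      intro hi
      rcases eq_or_ne i 1 with rfl | hne
      · exact thrifty_root hh hk B hB I
      · have hi2 : 2 ≤ i := by rcases hi with ⟨h1, -⟩; omega
        have hp : IsInternalNode h (i / 2) :=
          ⟨by omega, by rcases hi with ⟨-, h2⟩; omega⟩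
        obtain ⟨t, X, hl, ht⟩ := IH (i / 2) (by omega) hp
        obtain ⟨s, hs, Y, hY1, hY2⟩ :=
          thrifty_children hh hπk B hbound I (i / 2) hp t X hl ht i (by omega)
        exact ⟨s, Y, hY1, hY2⟩
  intro i hi
  exact ⟨hex i hi, fun t X hl ht j hj =>
    thrifty_children hh hπk B hbound I i hi t X hl ht j hj⟩
end
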